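/- arXiv:1209.1424 — 6 statements merged into one kernel-verified Lean document; each statement's English description precedes it below -/
import Mathlib

section
/- Let $\{Y_i\}_{i=1}^N$ be i.i.d. random variables with an eventually increasing common CDF $F$ (i.e., $F(x)<1$ for all finite $x$, $\lim_{x\to\infty}F(x)=1$, and $F$ is strictly increasing on some interval $(x_0,\infty)$). Let $G:(C,\infty)\to\mathbb{R}_+$ be strictly increasing with $\lim_{x\to\infty}G(x)(1-F(x))=1$, and let $Y^\star_N=\max_{1\le i\le N}Y_i$. Then for every $\epsilon\in(0,1)$, $\lim_{N\to\infty}\Pr\left[G^{-1}(N^{1-\epsilon})< Y^\star_N \le G^{-1}(N^{1+\epsilon})\right]=1$. -/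
open MeasureTheory ProbabilityTheory Filter Real Set Topology

/-! Writing `a_N = G⁻¹(N^(1-ε))` and `b_N = G⁻¹(N^(1+ε))`, independence gives
`P[a_N < Y*_N ≤ b_N] = F(b_N)^N - F(a_N)^N`. Since `G(x)(1 - F(x)) → 1`, we have
`N (1 - F(G⁻¹(N^s))) ~ N^(1-s)`, which tends to `0` for `s = 1 + ε` and to `∞` for `s = 1 - ε`.
Bernoulli's inequality `1 - N(1 - p) ≤ p^N` and the bound `p^N ≤ exp(-N(1 - p))` then give
`F(b_N)^N → 1` and `F(a_N)^N → 0`. -/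

/-- The maximum of `Y 1, ..., Y N`. -/
noncomputable def maxOver {Ω : Type*} (Y : ℕ → Ω → ℝ) (N : ℕ) (ω : Ω) : ℝ :=
  sSup ((fun i => Y i ω) '' Set.Icc 1 N)

open Asymptotics

section Maximum

variable {Ω : Type*} (Y : ℕ → Ω → ℝ)

lemma setOf_maxOver_le {N : ℕ} (hN : 1 ≤ N) (x : ℝ) :
    {ω | maxOver Y N ω ≤ x} = ⋂ i ∈ Finset.Icc 1 N, {ω | Y i ω ≤ x} := by
  ext ω
  simp only [Set.mem_ofPred_eq, Set.mem_iInter, Finset.mem_Icc, maxOver]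
  rw [csSup_le_iff ((Set.finite_Icc 1 N).image _).bddAbove
      ((Set.nonempty_Icc.2 hN).image _)]
  simp only [Set.forall_mem_image, Set.mem_Icc]

variable [MeasurableSpace Ω] (μ : Measure Ω)
  {F : ℝ → ℝ} (hindep : iIndepFun Y μ) (hcdf : ∀ i x, (μ {ω | Y i ω ≤ x}).toReal = F x)
include hindep hcdf

lemma measure_maxOver_le {N : ℕ} (hN : 1 ≤ N) (x : ℝ) :
    (μ {ω | maxOver Y N ω ≤ x}).toReal = F x ^ N := by
  rw [setOf_maxOver_le Y hN x,
    hindep.meas_biInter (s := fun i => {ω | Y i ω ≤ x})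
      fun i _ => ⟨Set.Iic x, measurableSet_Iic, rfl⟩,
    ENNReal.toReal_prod, Finset.prod_congr rfl fun i _ => hcdf i x, Finset.prod_const,
    Nat.card_Icc, Nat.add_sub_cancel]

lemma measure_maxOver_mem_Ioc [IsFiniteMeasure μ] (hmeas : ∀ i, Measurable (Y i)) {N : ℕ}
    (hN : 1 ≤ N) {a b : ℝ} (hab : a ≤ b) :
    (μ {ω | a < maxOver Y N ω ∧ maxOver Y N ω ≤ b}).toReal = F b ^ N - F a ^ N := by
  have hsub : {ω | maxOver Y N ω ≤ a} ⊆ {ω | maxOver Y N ω ≤ b} :=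
    fun ω h => le_trans h hab
  have hmeasA : MeasurableSet {ω | maxOver Y N ω ≤ a} := by
    rw [setOf_maxOver_le Y hN]
    exact Finset.measurableSet_biInter _ fun i _ => hmeas i measurableSet_Iic
  have hdiff : {ω | a < maxOver Y N ω ∧ maxOver Y N ω ≤ b}
      = {ω | maxOver Y N ω ≤ b} \ {ω | maxOver Y N ω ≤ a} := by
    ext ω
    simp only [Set.mem_ofPred_eq, Set.mem_sdiff, not_le]
    tauto
  rw [hdiff, measure_sdiff hsub hmeasA.nullMeasurableSet (measure_ne_top μ _),
    ENNReal.toReal_sub_of_le (measure_mono hsub) (measure_ne_top μ _),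
    measure_maxOver_le Y μ hindep hcdf hN, measure_maxOver_le Y μ hindep hcdf hN]

end Maximum

lemma tendsto_pow_self_nhds_one {p : ℕ → ℝ} (hp0 : ∀ n, 0 ≤ p n) (hp1 : ∀ n, p n ≤ 1)
    (h : Tendsto (fun n : ℕ => (n : ℝ) * (1 - p n)) atTop (𝓝 0)) :
    Tendsto (fun n => p n ^ n) atTop (𝓝 1) := by
  refine tendsto_of_tendsto_of_tendsto_of_le_of_le
    (g := fun n : ℕ => 1 - (n : ℝ) * (1 - p n))
    (by simpa using tendsto_const_nhds.sub h) tendsto_const_nhds (fun n => ?_)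
    fun n => pow_le_one₀ (hp0 n) (hp1 n)
  calc 1 - (n : ℝ) * (1 - p n) = 1 + n * (p n - 1) := by ring
    _ ≤ (1 + (p n - 1)) ^ n := one_add_mul_le_pow (by linarith [hp0 n]) n
    _ = p n ^ n := by rw [add_sub_cancel]

lemma tendsto_pow_self_nhds_zero {p : ℕ → ℝ} (hp0 : ∀ n, 0 ≤ p n)
    (h : Tendsto (fun n : ℕ => (n : ℝ) * (1 - p n)) atTop atTop) :
    Tendsto (fun n => p n ^ n) atTop (𝓝 0) := by
  refine tendsto_of_tendsto_of_tendsto_of_le_of_le tendsto_const_nhds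
    (tendsto_exp_neg_atTop_nhds_zero.comp h) (fun n => pow_nonneg (hp0 n) n) fun n => ?_
  calc p n ^ n ≤ exp (-(1 - p n)) ^ n :=
        pow_le_pow_left₀ (hp0 n) (by linarith [add_one_le_exp (-(1 - p n))]) n
    _ = exp (-((n : ℝ) * (1 - p n))) := by rw [← exp_nat_mul]; ring_nf

section RightInverse

variable {C : ℝ} {G Ginv : ℝ → ℝ} (hG : MonotoneOn G (Set.Ioi C))
include hG

lemma MonotoneOn.lt_of_rightInverse {y z : ℝ} (hy : Ginv y ∈ Set.Ioi C ∧ G (Ginv y) = y)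
    (hz : Ginv z ∈ Set.Ioi C ∧ G (Ginv z) = z) (hyz : y < z) : Ginv y < Ginv z := by
  by_contra! h
  have := hG hz.1 hy.1 h
  rw [hy.2, hz.2] at this
  linarith

variable (hinv : ∀ᶠ y in atTop, Ginv y ∈ Set.Ioi C ∧ G (Ginv y) = y)
include hinv

lemma MonotoneOn.tendsto_atTop_of_rightInverse : Tendsto Ginv atTop atTop := by
  refine tendsto_atTop.2 fun M => ?_
  have hM : max M (C + 1) ∈ Set.Ioi C := (lt_add_one C).trans_le (le_max_right _ _)
  filter_upwards [hinv, eventually_gt_atTop (G (max M (C + 1)))] with y hy hyM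
  by_contra! h
  have := hG hy.1 hM (h.trans_le (le_max_left _ _)).le
  rw [hy.2] at this
  linarith

lemma MonotoneOn.isEquivalent_natCast_mul_tail {F : ℝ → ℝ}
    (htail : Tendsto (fun x => G x * (1 - F x)) atTop (𝓝 1)) {s : ℝ} (hs : 0 < s) :
    (fun N : ℕ => (N : ℝ) * (1 - F (Ginv ((N : ℝ) ^ s)))) ~[atTop]
      fun N => (N : ℝ) ^ (1 - s) := by
  have hNs : Tendsto (fun N : ℕ => (N : ℝ) ^ s) atTop atTop :=
    (tendsto_rpow_atTop hs).comp tendsto_natCast_atTop_atTop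
  have hone : (fun N : ℕ => G (Ginv ((N : ℝ) ^ s)) * (1 - F (Ginv ((N : ℝ) ^ s)))) ~[atTop]
      fun _ => (1 : ℝ) :=
    (isEquivalent_const_iff_tendsto one_ne_zero).2
      (htail.comp ((hG.tendsto_atTop_of_rightInverse hinv).comp hNs))
  have hprod := hone.mul (IsEquivalent.refl (u := fun N : ℕ => (N : ℝ) ^ (1 - s)))
  simp only [Pi.mul_def, one_mul] at hprod
  refine hprod.congr_left ?_
  filter_upwards [hNs.eventually hinv, eventually_gt_atTop 0] with N hN hN0
  rw [hN.2, mul_right_comm, ← rpow_add (Nat.cast_pos.2 hN0), add_sub_cancel, rpow_one]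

end RightInverse

theorem extreme_order_statistic_concentration_general
    {Ω : Type*} [MeasurableSpace Ω] (μ : Measure Ω) [IsProbabilityMeasure μ]
    (Y : ℕ → Ω → ℝ) (hmeas : ∀ i, Measurable (Y i))
    (hindep : iIndepFun Y μ)
    (F : ℝ → ℝ) (hcdf : ∀ i x, (μ {ω | Y i ω ≤ x}).toReal = F x)
    (C : ℝ) (G Ginv : ℝ → ℝ)
    (hGmono : StrictMonoOn G (Set.Ioi C))
    (htail : Tendsto (fun x => G x * (1 - F x)) atTop (𝓝 1))
    (hinv : ∀ᶠ y in atTop, Ginv y ∈ Set.Ioi C ∧ G (Ginv y) = y)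
    (ε : ℝ) (hε : ε ∈ Set.Ioo (0 : ℝ) 1) :
    Tendsto (fun N : ℕ =>
      (μ {ω | Ginv ((N : ℝ) ^ ((1 : ℝ) - ε)) < maxOver Y N ω ∧
              maxOver Y N ω ≤ Ginv ((N : ℝ) ^ ((1 : ℝ) + ε))}).toReal)
      atTop (𝓝 1) := by
  obtain ⟨hε0, hε1⟩ := hε
  have hG := hGmono.monotoneOn
  have hF0 (x : ℝ) : 0 ≤ F x := hcdf 0 x ▸ ENNReal.toReal_nonneg
  have hF1 (x : ℝ) : F x ≤ 1 := hcdf 0 x ▸ measureReal_le_one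
  have hpow {s : ℝ} (hs : 0 < s) : Tendsto (fun N : ℕ => (N : ℝ) ^ s) atTop atTop :=
    (tendsto_rpow_atTop hs).comp tendsto_natCast_atTop_atTop
  have hupper : Tendsto (fun N : ℕ => F (Ginv ((N : ℝ) ^ (1 + ε))) ^ N) atTop (𝓝 1) := by
    refine tendsto_pow_self_nhds_one (fun _ => hF0 _) (fun _ => hF1 _)
      ((hG.isEquivalent_natCast_mul_tail hinv htail (by linarith)).symm.tendsto_nhds ?_)
    rw [sub_add_cancel_left]
    exact (tendsto_rpow_neg_atTop hε0).comp tendsto_natCast_atTop_atTop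
  have hlower : Tendsto (fun N : ℕ => F (Ginv ((N : ℝ) ^ (1 - ε))) ^ N) atTop (𝓝 0) := by
    refine tendsto_pow_self_nhds_zero (fun _ => hF0 _)
      ((hG.isEquivalent_natCast_mul_tail hinv htail (by linarith)).symm.tendsto_atTop ?_)
    rw [sub_sub_cancel]
    exact hpow hε0
  refine Tendsto.congr' ?_ (by simpa using hupper.sub hlower)
  filter_upwards [(hpow (by linarith : 0 < 1 - ε)).eventually hinv,
    (hpow (by linarith : 0 < 1 + ε)).eventually hinv, eventually_gt_atTop 1] with N ha hb hN
  have hab := hG.lt_of_rightInverse ha hb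
    (rpow_lt_rpow_of_exponent_lt (Nat.one_lt_cast.2 hN) (by linarith : 1 - ε < 1 + ε))
  exact (measure_maxOver_mem_Ioc Y μ hindep hcdf hmeas hN.le hab.le).symm

/-- Concentration of the extreme order statistic: for i.i.d. `Y i` with eventually
increasing CDF `F` whose tail is characterized by `G`, the maximum lies in
`(G⁻¹(N^(1-ε)), G⁻¹(N^(1+ε))]` with probability tending to one. -/
theorem extreme_order_statistic_concentration
    {Ω : Type*} [MeasurableSpace Ω] (μ : Measure Ω) [IsProbabilityMeasure μ]
    (Y : ℕ → Ω → ℝ) (hmeas : ∀ i, Measurable (Y i))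
    (hindep : iIndepFun Y μ)
    (F : ℝ → ℝ) (hcdf : ∀ i x, (μ {ω | Y i ω ≤ x}).toReal = F x)
    (hFlt1 : ∀ x, F x < 1)
    (hFto1 : Tendsto F atTop (𝓝 1))
    (x0 : ℝ) (hFmono : StrictMonoOn F (Set.Ioi x0))
    (C : ℝ) (G Ginv : ℝ → ℝ)
    (hGmono : StrictMonoOn G (Set.Ioi C))
    (hGpos : ∀ x ∈ Set.Ioi C, 0 < G x)
    (htail : Tendsto (fun x => G x * (1 - F x)) atTop (𝓝 1))
    (hinv : ∀ᶠ y in atTop, Ginv y ∈ Set.Ioi C ∧ G (Ginv y) = y)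
    (ε : ℝ) (hε : ε ∈ Set.Ioo (0 : ℝ) 1) :
    Tendsto (fun N : ℕ =>
      (μ {ω | Ginv ((N : ℝ) ^ ((1 : ℝ) - ε)) < maxOver Y N ω ∧
              maxOver Y N ω ≤ Ginv ((N : ℝ) ^ ((1 : ℝ) + ε))}).toReal)
      atTop (𝓝 1) :=
  extreme_order_statistic_concentration_general μ Y hmeas hindep F hcdf C G Ginv hGmono htail hinv ε
    hε
end

section
/- Let $\{Y_i\}_{i=1}^N$ be i.i.d. with eventually increasing CDF $F$ whose tail is characterized by $G$ (i.e., $\lim_{x\to\infty}G(x)(1-F(x))=1$), and let $Y^\star_N=\max_i Y_i$. Then for every $\epsilon\in(0,1)$ and all sufficiently large $N$, $\Pr[Y^\star_N \le G^{-1}(N^{1+\epsilon})] = 1-\Theta(N^{-\epsilon})$ and $\Pr[Y^\star_N \le G^{-1}(N^{1-\epsilon})] = e^{-\Theta(N^{\epsilon})}$. -/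
/-! By independence `P[Y*_N ≤ t] = F(t)^N`. Along `t_N = G⁻¹(N^r)` the tail condition gives
`N^r (1 - F(t_N)) → 1`, so with `p = F(t_N)` the quantity `x = N (1 - p)` is of order `N^(1-r)`.
For `r = 1 + ε` we have `x → 0`, and Bernoulli's inequality together with `p^N (1 + x) ≤ 1`
gives `x / (1 + x) ≤ 1 - p^N ≤ x`. For `r = 1 - ε` we have `p → 1`, and
`e^(-2(1-p)) ≤ p ≤ e^(-(1-p))` gives `e^(-2x) ≤ p^N ≤ e^(-x)`. -/

open MeasureTheory ProbabilityTheory Filter Real Set Topology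

lemma maxOver_le_iff {Ω : Type*} {Y : ℕ → Ω → ℝ} {N : ℕ} (hN : 1 ≤ N) {ω : Ω} {t : ℝ} :
    maxOver Y N ω ≤ t ↔ ∀ i ∈ Set.Icc 1 N, Y i ω ≤ t := by
  rw [maxOver, csSup_le_iff ((Set.finite_Icc 1 N).image _).bddAbove
    ((Set.nonempty_Icc.2 hN).image _), Set.forall_mem_image]

lemma measure_maxOver_le_toReal {Ω : Type*} [MeasurableSpace Ω] {μ : Measure Ω}
    {Y : ℕ → Ω → ℝ} (hindep : iIndepFun Y μ) {F : ℝ → ℝ}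
    (hcdf : ∀ i x, (μ {ω | Y i ω ≤ x}).toReal = F x) {N : ℕ} (hN : 1 ≤ N) (t : ℝ) :
    (μ {ω | maxOver Y N ω ≤ t}).toReal = F t ^ N := by
  have hset : {ω | maxOver Y N ω ≤ t} = ⋂ i ∈ Finset.Icc 1 N, {ω | Y i ω ≤ t} := by
    ext ω
    simp [maxOver_le_iff hN]
  rw [hset, hindep.meas_biInter (s := fun i => {ω | Y i ω ≤ t})
    fun i _ => ⟨Iic t, measurableSet_Iic, rfl⟩,
    ENNReal.toReal_prod, Finset.prod_congr rfl fun i _ => hcdf i t, Finset.prod_const,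
    Nat.card_Icc, Nat.add_sub_cancel]

lemma MonotoneOn.tendsto_atTop_of_eventually_rightInverse {G Ginv : ℝ → ℝ} {C : ℝ}
    (hG : MonotoneOn G (Ioi C)) (hinv : ∀ᶠ y in atTop, Ginv y ∈ Ioi C ∧ G (Ginv y) = y) :
    Tendsto Ginv atTop atTop := by
  refine tendsto_atTop.2 fun M => ?_
  have hM : max M (C + 1) ∈ Ioi C := lt_max_of_lt_right (lt_add_one C)
  filter_upwards [hinv, eventually_gt_atTop (G (max M (C + 1)))] with y ⟨hyC, hGy⟩ hy
  by_contra! hlt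
  have := hG hyC hM (hlt.le.trans (le_max_left _ _))
  linarith

lemma tendsto_mul_one_sub_comp_rightInverse {F G Ginv : ℝ → ℝ}
    (htail : Tendsto (fun x => G x * (1 - F x)) atTop (𝓝 1))
    (hGinv : Tendsto Ginv atTop atTop) (hinv : ∀ᶠ y in atTop, G (Ginv y) = y) :
    Tendsto (fun y => y * (1 - F (Ginv y))) atTop (𝓝 1) :=
  (htail.comp hGinv).congr' (hinv.mono fun y hy => by simp only [Function.comp, hy])

lemma pow_mul_one_add_mul_one_sub_le_one {p : ℝ} (hp0 : 0 ≤ p) (hp1 : p ≤ 1) (N : ℕ) :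
    p ^ N * (1 + N * (1 - p)) ≤ 1 :=
  calc p ^ N * (1 + N * (1 - p)) ≤ p ^ N * (1 + (1 - p)) ^ N :=
        mul_le_mul_of_nonneg_left (one_add_mul_le_pow (by linarith) N) (pow_nonneg hp0 N)
    _ = (1 - (1 - p) ^ 2) ^ N := by rw [← mul_pow]; ring
    _ ≤ 1 := pow_le_one₀ (by nlinarith) (by nlinarith)

lemma exp_neg_two_mul_one_sub_le {p : ℝ} (hp : 1 / 2 ≤ p) (hp1 : p ≤ 1) :
    exp (-(2 * (1 - p))) ≤ p := by
  rw [exp_neg, inv_le_iff_one_le_mul₀ (exp_pos _)]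
  nlinarith [add_one_le_exp (2 * (1 - p))]

lemma exp_neg_two_mul_le_pow_le_exp_neg {p : ℝ} (hp : 1 / 2 ≤ p) (hp1 : p ≤ 1) (N : ℕ) :
    exp (-(2 * (N * (1 - p)))) ≤ p ^ N ∧ p ^ N ≤ exp (-(N * (1 - p))) := by
  constructor
  · calc exp (-(2 * (N * (1 - p)))) = exp (-(2 * (1 - p))) ^ N := by
          rw [← exp_nat_mul]; ring_nf
      _ ≤ p ^ N := pow_le_pow_left₀ (exp_pos _).le (exp_neg_two_mul_one_sub_le hp hp1) N
  · calc p ^ N ≤ exp (-(1 - p)) ^ N :=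
          pow_le_pow_left₀ (by linarith) (by linarith [add_one_le_exp (-(1 - p))]) N
      _ = exp (-(N * (1 - p))) := by rw [← exp_nat_mul]; ring_nf

lemma eventually_bounds_of_tendsto_rpow_mul_one_sub {p : ℕ → ℝ} {r s : ℝ} (hr : 0 < r)
    (hrs : s + r = 1) (h : Tendsto (fun N : ℕ => (N : ℝ) ^ r * (1 - p N)) atTop (𝓝 1)) :
    ∀ᶠ N : ℕ in atTop, p N ∈ Icc (1 / 2) 1 ∧
      (N : ℝ) * (1 - p N) ∈ Icc ((N : ℝ) ^ s / 2) (2 * (N : ℝ) ^ s) := by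
  have hrpow := (tendsto_rpow_atTop hr).comp tendsto_natCast_atTop_atTop
  filter_upwards [h.eventually (Ioo_mem_nhds one_half_lt_one one_lt_two),
    hrpow.eventually_ge_atTop 4, eventually_gt_atTop 0] with N ⟨hlo, hhi⟩ hN4 hN0
  have hN : (0 : ℝ) < N := Nat.cast_pos.2 hN0
  have hNs : 0 < (N : ℝ) ^ s := rpow_pos_of_pos hN s
  have hsplit : (N : ℝ) * (1 - p N) = N ^ s * (N ^ r * (1 - p N)) := by
    rw [← mul_assoc, ← rpow_add hN, hrs, rpow_one]
  simp only [Function.comp_apply] at hN4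
  refine ⟨⟨by nlinarith, by nlinarith⟩, ?_, ?_⟩ <;> rw [hsplit] <;> nlinarith

lemma eventually_one_sub_pow_bounds {p : ℕ → ℝ} {ε : ℝ} (hε : 0 < ε)
    (h : Tendsto (fun N : ℕ => (N : ℝ) ^ (1 + ε) * (1 - p N)) atTop (𝓝 1)) :
    ∀ᶠ N : ℕ in atTop, 1 / 4 * (N : ℝ) ^ (-ε) ≤ 1 - p N ^ N ∧
      1 - p N ^ N ≤ 2 * (N : ℝ) ^ (-ε) := by
  have hsmall : ∀ᶠ N : ℕ in atTop, (N : ℝ) ^ (-ε) ≤ 1 / 2 :=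
    ((tendsto_rpow_neg_atTop hε).comp tendsto_natCast_atTop_atTop).eventually_le_const
      one_half_pos
  filter_upwards [eventually_bounds_of_tendsto_rpow_mul_one_sub (s := -ε) (by linarith)
    (by ring) h, hsmall] with N ⟨⟨hp, hp1⟩, hlo, hhi⟩ hNε
  set x := (N : ℝ) * (1 - p N)
  have hpow := pow_mul_one_add_mul_one_sub_le_one (by linarith) hp1 N
  have hpow1 : p N ^ N ≤ 1 := pow_le_one₀ (by linarith) hp1
  have hbern := one_add_mul_sub_le_pow (show -1 ≤ p N by linarith) N
  constructor
  · nlinarith [mul_nonneg (sub_nonneg.2 hpow1) (show 0 ≤ 1 - x by linarith)]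
  · linarith

lemma eventually_pow_exp_bounds {p : ℕ → ℝ} {ε : ℝ} (hε : ε < 1)
    (h : Tendsto (fun N : ℕ => (N : ℝ) ^ (1 - ε) * (1 - p N)) atTop (𝓝 1)) :
    ∀ᶠ N : ℕ in atTop, exp (-(4 * (N : ℝ) ^ ε)) ≤ p N ^ N ∧
      p N ^ N ≤ exp (-(1 / 2 * (N : ℝ) ^ ε)) := by
  filter_upwards [eventually_bounds_of_tendsto_rpow_mul_one_sub (s := ε) (by linarith)
    (by ring) h] with N ⟨⟨hp, hp1⟩, hlo, hhi⟩
  obtain ⟨hexp_lo, hexp_hi⟩ := exp_neg_two_mul_le_pow_le_exp_neg hp hp1 N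
  exact ⟨(exp_le_exp.2 (by linarith)).trans hexp_lo, hexp_hi.trans (exp_le_exp.2 (by linarith))⟩

theorem extreme_order_statistic_theta_bounds_general
    {Ω : Type*} [MeasurableSpace Ω] (μ : Measure Ω)
    (Y : ℕ → Ω → ℝ)
    (hindep : iIndepFun Y μ)
    (F : ℝ → ℝ) (hcdf : ∀ i x, (μ {ω | Y i ω ≤ x}).toReal = F x)
    (C : ℝ) (G Ginv : ℝ → ℝ)
    (hGmono : StrictMonoOn G (Set.Ioi C))
    (htail : Tendsto (fun x => G x * (1 - F x)) atTop (𝓝 1))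
    (hinv : ∀ᶠ y in atTop, Ginv y ∈ Set.Ioi C ∧ G (Ginv y) = y)
    (ε : ℝ) (hε : ε ∈ Set.Ioo (0 : ℝ) 1) :
    (∃ c₁ c₂ : ℝ, 0 < c₁ ∧ 0 < c₂ ∧ ∀ᶠ N : ℕ in atTop,
      c₁ * (N : ℝ) ^ (-ε) ≤
        1 - (μ {ω | maxOver Y N ω ≤ Ginv ((N : ℝ) ^ ((1 : ℝ) + ε))}).toReal ∧
      1 - (μ {ω | maxOver Y N ω ≤ Ginv ((N : ℝ) ^ ((1 : ℝ) + ε))}).toReal ≤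
        c₂ * (N : ℝ) ^ (-ε)) ∧
    (∃ d₁ d₂ : ℝ, 0 < d₁ ∧ 0 < d₂ ∧ ∀ᶠ N : ℕ in atTop,
      Real.exp (-(d₂ * (N : ℝ) ^ ε)) ≤
        (μ {ω | maxOver Y N ω ≤ Ginv ((N : ℝ) ^ ((1 : ℝ) - ε))}).toReal ∧
      (μ {ω | maxOver Y N ω ≤ Ginv ((N : ℝ) ^ ((1 : ℝ) - ε))}).toReal ≤
        Real.exp (-(d₁ * (N : ℝ) ^ ε))) := by
  have hGinv := hGmono.monotoneOn.tendsto_atTop_of_eventually_rightInverse hinv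
  have hsample : ∀ r : ℝ, 0 < r →
      Tendsto (fun N : ℕ => (N : ℝ) ^ r * (1 - F (Ginv ((N : ℝ) ^ r)))) atTop (𝓝 1) :=
    fun r hr =>
      (tendsto_mul_one_sub_comp_rightInverse htail hGinv (hinv.mono fun _ h => h.2)).comp
        ((tendsto_rpow_atTop hr).comp tendsto_natCast_atTop_atTop)
  have hmax : ∀ᶠ N : ℕ in atTop, ∀ t, (μ {ω | maxOver Y N ω ≤ t}).toReal = F t ^ N :=
    (eventually_ge_atTop 1).mono fun N hN => measure_maxOver_le_toReal hindep hcdf hN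
  refine ⟨⟨1 / 4, 2, by norm_num, by norm_num, ?_⟩, ⟨1 / 2, 4, by norm_num, by norm_num, ?_⟩⟩
  · filter_upwards [hmax, eventually_one_sub_pow_bounds hε.1 (hsample _ (by linarith [hε.1]))]
      with N hN hbounds
    rwa [hN]
  · filter_upwards [hmax, eventually_pow_exp_bounds hε.2 (hsample _ (by linarith [hε.2]))]
      with N hN hbounds
    rwa [hN]

/-- Quantitative tail bounds for the extreme order statistic:
`Pr[Y*_N ≤ G⁻¹(N^(1+ε))] = 1 - Θ(N^(-ε))` and
`Pr[Y*_N ≤ G⁻¹(N^(1-ε))] = e^(-Θ(N^ε))` for large `N`. -/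
theorem extreme_order_statistic_theta_bounds
    {Ω : Type*} [MeasurableSpace Ω] (μ : Measure Ω) [IsProbabilityMeasure μ]
    (Y : ℕ → Ω → ℝ) (hmeas : ∀ i, Measurable (Y i))
    (hindep : iIndepFun Y μ)
    (F : ℝ → ℝ) (hcdf : ∀ i x, (μ {ω | Y i ω ≤ x}).toReal = F x)
    (hFlt1 : ∀ x, F x < 1)
    (hFto1 : Tendsto F atTop (𝓝 1))
    (x0 : ℝ) (hFmono : StrictMonoOn F (Set.Ioi x0))
    (C : ℝ) (G Ginv : ℝ → ℝ)
    (hGmono : StrictMonoOn G (Set.Ioi C))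
    (hGpos : ∀ x ∈ Set.Ioi C, 0 < G x)
    (htail : Tendsto (fun x => G x * (1 - F x)) atTop (𝓝 1))
    (hinv : ∀ᶠ y in atTop, Ginv y ∈ Set.Ioi C ∧ G (Ginv y) = y)
    (ε : ℝ) (hε : ε ∈ Set.Ioo (0 : ℝ) 1) :
    (∃ c₁ c₂ : ℝ, 0 < c₁ ∧ 0 < c₂ ∧ ∀ᶠ N : ℕ in atTop,
      c₁ * (N : ℝ) ^ (-ε) ≤
        1 - (μ {ω | maxOver Y N ω ≤ Ginv ((N : ℝ) ^ ((1 : ℝ) + ε))}).toReal ∧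
      1 - (μ {ω | maxOver Y N ω ≤ Ginv ((N : ℝ) ^ ((1 : ℝ) + ε))}).toReal ≤
        c₂ * (N : ℝ) ^ (-ε)) ∧
    (∃ d₁ d₂ : ℝ, 0 < d₁ ∧ 0 < d₂ ∧ ∀ᶠ N : ℕ in atTop,
      Real.exp (-(d₂ * (N : ℝ) ^ ε)) ≤
        (μ {ω | maxOver Y N ω ≤ Ginv ((N : ℝ) ^ ((1 : ℝ) - ε))}).toReal ∧
      (μ {ω | maxOver Y N ω ≤ Ginv ((N : ℝ) ^ ((1 : ℝ) - ε))}).toReal ≤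
        Real.exp (-(d₁ * (N : ℝ) ^ ε))) :=
  extreme_order_statistic_theta_bounds_general μ Y hindep F hcdf C G Ginv hGmono htail hinv ε hε
end

section
/- Under the double-exponential tail assumption on $F_h$ (class $\mathcal{C}$ tail with parameters $\alpha,\beta,n,l,H$) and for fixed $\lambda>0$, let $X^\star_N=\frac{1}{\lambda}\max_{1\le i\le N}h_i$ and define $\tilde{R}(N)=\mathbb{E}\left[\log(X^\star_N)\,\mathbf{1}\{X^\star_N\ge 1\}\right]$. Then $\lim_{N\to\infty}\frac{\tilde{R}(N)}{\log\left(\frac{1}{\lambda}\left(\frac{1}{\beta}\log(\alpha N)\right)^{1/n}\right)}=1$. -/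
open MeasureTheory ProbabilityTheory Filter Real Set Topology

open Asymptotics

/-!
Write `d_N = log ((1/λ) (log (α N) / β)^(1/n))` and `Y_N = log (X*_N) 1{X*_N ≥ 1}`. The class-𝒞
tail gives `log (1 - F x) = -β x^n + o(x^n)`, since `x^l`, `α` and `exp H` are negligible on that
scale. Hence `Y_N` concentrates in the window `d_N ± √d_N`:
* by the union bound and `1 - F x ≤ exp (-(β/2) x^n)`, the excess of `Y_N` over `d_N + √d_N` has
  an exponential tail whose integral tends to `0`, so `E Y_N ≤ d_N + √d_N + o(1)` (layer cake);
* by independence and `1 - F x ≥ exp (-2β x^n)`,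
  `P(Y_N < d_N - √d_N) ≤ exp (-N (1 - F (λ e^{d_N - √d_N}))) → 0`, so Markov's inequality gives
  `E Y_N ≥ (d_N - √d_N)(1 - o(1))`.
-/

noncomputable def truncLog (x : ℝ) : ℝ := if 1 ≤ x then log x else 0

lemma truncLog_nonneg (x : ℝ) : 0 ≤ truncLog x := by
  unfold truncLog
  split_ifs with hx
  exacts [log_nonneg hx, le_rfl]

lemma measurable_truncLog : Measurable truncLog :=
  Measurable.ite measurableSet_Ici measurable_log measurable_const

lemma lt_truncLog_iff {x y : ℝ} (hy : 0 ≤ y) : y < truncLog x ↔ exp y < x := by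
  unfold truncLog
  split_ifs with hx
  · exact lt_log_iff_exp_lt (by linarith)
  · exact iff_of_false (by linarith) (by linarith [one_le_exp hy])

lemma truncLog_lt_iff {x b : ℝ} (hb : 0 < b) : truncLog x < b ↔ x < exp b := by
  unfold truncLog
  split_ifs with hx
  · exact log_lt_iff_lt_exp (by linarith)
  · exact iff_of_true hb (by linarith [one_le_exp hb.le])

lemma maxOver_eq_sup' {Ω : Type*} {h : ℕ → Ω → ℝ} {N : ℕ} (hN : 1 ≤ N) (ω : Ω) :
    maxOver h N ω = (Finset.Icc 1 N).sup' (Finset.nonempty_Icc.mpr hN) (h · ω) := by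
  rw [Finset.sup'_eq_csSup_image, maxOver, Finset.coe_Icc]

section maxOver

variable {Ω : Type*} [MeasurableSpace Ω] {μ : Measure Ω} {h : ℕ → Ω → ℝ} {F : ℝ → ℝ} {N : ℕ}

lemma measurable_maxOver (hmeas : ∀ i, Measurable (h i)) (N : ℕ) :
    Measurable (maxOver h N) := by
  rcases Nat.eq_zero_or_pos N with rfl | hN
  · have : maxOver h 0 = fun _ => 0 := by
      funext ω
      simp [maxOver]
    exact this ▸ measurable_const
  · have : maxOver h N = (Finset.Icc 1 N).sup' (Finset.nonempty_Icc.mpr hN) h := by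
      funext ω
      rw [maxOver_eq_sup' hN ω, Finset.sup'_apply]
    exact this ▸ Finset.measurable_sup' _ fun i _ => hmeas i

lemma measureReal_maxOver_le (hindep : iIndepFun h μ)
    (hcdf : ∀ i x, (μ {ω | h i ω ≤ x}).toReal = F x) (hN : 1 ≤ N) (x : ℝ) :
    μ.real {ω | maxOver h N ω ≤ x} = F x ^ N := by
  have hset : {ω | maxOver h N ω ≤ x} = ⋂ i ∈ Finset.Icc 1 N, {ω | h i ω ≤ x} := by
    ext ω
    simp only [Set.mem_ofPred_eq, Set.mem_iInter, maxOver_eq_sup' hN ω, Finset.sup'_le_iff]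
  rw [measureReal_def, hset, hindep.meas_biInter (s := fun i => {ω | h i ω ≤ x})
    fun i _ => ⟨Set.Iic x, measurableSet_Iic, rfl⟩, ENNReal.toReal_prod]
  simp [hcdf]

lemma measureReal_lt_maxOver_le [IsProbabilityMeasure μ] (hmeas : ∀ i, Measurable (h i))
    (hcdf : ∀ i x, (μ {ω | h i ω ≤ x}).toReal = F x) (hN : 1 ≤ N) (x : ℝ) :
    μ.real {ω | x < maxOver h N ω} ≤ N * (1 - F x) := by
  have hset : {ω | x < maxOver h N ω} = ⋃ i ∈ Finset.Icc 1 N, {ω | h i ω ≤ x}ᶜ := by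
    ext ω
    simp only [Set.mem_ofPred_eq, maxOver_eq_sup' hN ω, Finset.lt_sup'_iff, Set.mem_iUnion,
      Set.mem_compl_iff, not_le, exists_prop]
  have hcompl (i : ℕ) : μ.real {ω | h i ω ≤ x}ᶜ = 1 - F x := by
    rw [probReal_compl_eq_one_sub (measurableSet_le (hmeas i) measurable_const), ← hcdf i x,
      measureReal_def]
  rw [hset]
  refine (measureReal_biUnion_finset_le _ _).trans_eq ?_
  simp [hcompl, mul_sub]

end maxOver

section ClassCTail

variable {F H : ℝ → ℝ} {α β n l : ℝ}

lemma eventually_tail_pos (hα : 0 < α)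
    (htail : Tendsto (fun x => (1 - F x) / (α * x ^ l * exp (-β * x ^ n + H x))) atTop (𝓝 1)) :
    ∀ᶠ x in atTop, 0 < 1 - F x := by
  filter_upwards [htail.eventually (lt_mem_nhds one_pos), eventually_gt_atTop 0] with x hr hx
  exact (div_pos_iff_of_pos_right (by positivity)).mp hr

lemma isLittleO_log_tail_add (hα : 0 < α) (hn : 0 < n) (hHo : H =o[atTop] fun x => x ^ n)
    (htail : Tendsto (fun x => (1 - F x) / (α * x ^ l * exp (-β * x ^ n + H x))) atTop (𝓝 1)) :
    (fun x => log (1 - F x) + β * x ^ n) =o[atTop] fun x => x ^ n := by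
  set r := fun x => (1 - F x) / (α * x ^ l * exp (-β * x ^ n + H x))
  have hsplit : ∀ᶠ x in atTop,
      log (r x) + log α + l * log x + H x = log (1 - F x) + β * x ^ n := by
    filter_upwards [eventually_tail_pos hα htail, eventually_gt_atTop 0] with x hF hx
    have hD : 0 < α * x ^ l * exp (-β * x ^ n + H x) := by positivity
    rw [log_div hF.ne' hD.ne', log_mul (by positivity) (exp_pos _).ne',
      log_mul hα.ne' (by positivity), log_rpow hx, log_exp]
    ring
  have hone : (fun _ => (1 : ℝ)) =o[atTop] fun x => x ^ n :=
    (isLittleO_one_left_iff ℝ).mpr (tendsto_norm_atTop_atTop.comp (tendsto_rpow_atTop hn))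
  have hconst : (fun x => log (r x) + log α) =o[atTop] fun x => x ^ n :=
    ((((htail.log one_ne_zero).add_const (log α)).isBigO_one ℝ).trans_isLittleO hone)
  exact ((hconst.add ((isLittleO_log_rpow_atTop hn).const_mul_left l)).add hHo).congr' hsplit
    EventuallyEq.rfl

lemma eventually_tail_le_exp (hα : 0 < α) (hn : 0 < n) (hHo : H =o[atTop] fun x => x ^ n)
    (htail : Tendsto (fun x => (1 - F x) / (α * x ^ l * exp (-β * x ^ n + H x))) atTop (𝓝 1))
    {ε : ℝ} (hε : 0 < ε) :
    ∀ᶠ x in atTop, 1 - F x ≤ exp (-(β - ε) * x ^ n) := by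
  filter_upwards [(isLittleO_log_tail_add hα hn hHo htail).bound hε, eventually_tail_pos hα htail,
    eventually_gt_atTop 0] with x hbound hF hx
  rw [Real.norm_eq_abs, Real.norm_of_nonneg (by positivity)] at hbound
  rw [← log_le_iff_le_exp hF]
  linarith [(abs_le.mp hbound).2]

lemma eventually_exp_le_tail (hα : 0 < α) (hn : 0 < n) (hHo : H =o[atTop] fun x => x ^ n)
    (htail : Tendsto (fun x => (1 - F x) / (α * x ^ l * exp (-β * x ^ n + H x))) atTop (𝓝 1))
    {ε : ℝ} (hε : 0 < ε) :
    ∀ᶠ x in atTop, exp (-(β + ε) * x ^ n) ≤ 1 - F x := by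
  filter_upwards [(isLittleO_log_tail_add hα hn hHo htail).bound hε, eventually_tail_pos hα htail,
    eventually_gt_atTop 0] with x hbound hF hx
  rw [Real.norm_eq_abs, Real.norm_of_nonneg (by positivity)] at hbound
  rw [← le_log_iff_exp_le hF]
  linarith [(abs_le.mp hbound).1]

end ClassCTail

section IntegralBounds

variable {Ω : Type*} [MeasurableSpace Ω] {μ : Measure Ω} [IsProbabilityMeasure μ]

lemma integrable_and_integral_le_of_measureReal_lt_le {Y : Ω → ℝ} (hYm : Measurable Y)
    (hY0 : ∀ ω, 0 ≤ Y ω) {c K r : ℝ} (hr : 0 < r)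
    (hbound : ∀ t > 0, μ.real {ω | c + t < Y ω} ≤ K * exp (-r * t)) :
    Integrable Y μ ∧ ∫ ω, Y ω ∂μ ≤ c + K / r := by
  have hK : 0 ≤ K := by
    have := (measureReal_nonneg).trans (hbound 1 one_pos)
    exact nonneg_of_mul_nonneg_left this (exp_pos _)
  set Z : Ω → ℝ := fun ω => max (Y ω - c) 0
  have hZm : Measurable Z := (hYm.sub_const c).max measurable_const
  have hZ0 : ∀ ω, 0 ≤ Z ω := fun ω => le_max_right _ _
  have hexp_int : IntegrableOn (fun t => K * exp (-r * t)) (Ioi 0) :=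
    (exp_neg_integrableOn_Ioi 0 hr).const_mul K
  have hexp_val : ∫ t in Ioi 0, K * exp (-r * t) = K / r := by
    rw [integral_const_mul, integral_exp_mul_Ioi (neg_neg_of_pos hr)]
    field_simp
    simp
  -- layer-cake formula for the excess `Z = (Y - c)⁺`
  have hZ_lint : ∫⁻ ω, ENNReal.ofReal (Z ω) ∂μ ≤ ENNReal.ofReal (K / r) := by
    rw [lintegral_eq_lintegral_meas_lt μ (.of_forall hZ0) hZm.aemeasurable, ← hexp_val,
      ofReal_integral_eq_lintegral_ofReal hexp_int (.of_forall fun t => by positivity)]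
    refine setLIntegral_mono (by fun_prop) fun t ht => ?_
    have hset : {ω | t < Z ω} = {ω | c + t < Y ω} := by
      ext ω
      simp only [Z, Set.mem_ofPred_eq]
      rw [lt_max_iff, or_iff_left (not_lt.mpr (le_of_lt ht)), lt_sub_iff_add_lt']
    rw [hset, ← ofReal_measureReal]
    exact ENNReal.ofReal_le_ofReal (hbound t ht)
  have hZint : Integrable Z μ :=
    ⟨hZm.aestronglyMeasurable, (hasFiniteIntegral_iff_ofReal (.of_forall hZ0)).mpr
      (hZ_lint.trans_lt ENNReal.ofReal_lt_top)⟩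
  have hYZ : ∀ ω, Y ω ≤ Z ω + c := fun ω => by linarith [le_max_left (Y ω - c) 0]
  have hYint : Integrable Y μ :=
    (hZint.add (integrable_const c)).mono' hYm.aestronglyMeasurable
      (.of_forall fun ω => by rw [Real.norm_of_nonneg (hY0 ω)]; exact hYZ ω)
  have hZ_int_le : ∫ ω, Z ω ∂μ ≤ K / r := by
    rw [integral_eq_lintegral_of_nonneg_ae (.of_forall hZ0) hZm.aestronglyMeasurable]
    exact ENNReal.toReal_le_of_le_ofReal (div_nonneg hK hr.le) hZ_lint
  refine ⟨hYint, ?_⟩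
  calc ∫ ω, Y ω ∂μ ≤ ∫ ω, (Z ω + c) ∂μ := integral_mono hYint (hZint.add (integrable_const c)) hYZ
    _ = ∫ ω, Z ω ∂μ + c := by simp [integral_add hZint (integrable_const c)]
    _ ≤ c + K / r := by linarith

lemma tendsto_integral_div_of_concentration {Y : ℕ → Ω → ℝ} (hYm : ∀ N, Measurable (Y N))
    (hY0 : ∀ N ω, 0 ≤ Y N ω) {d w K r : ℕ → ℝ} (hd : Tendsto d atTop atTop)
    (hwd : Tendsto (fun N => w N / d N) atTop (𝓝 0)) (hr : ∀ᶠ N in atTop, 0 < r N)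
    (hKr : Tendsto (fun N => K N / r N) atTop (𝓝 0))
    (hupper : ∀ᶠ N in atTop, ∀ t > 0,
      μ.real {ω | d N + w N + t < Y N ω} ≤ K N * exp (-r N * t))
    (hlower : Tendsto (fun N => μ.real {ω | Y N ω < d N - w N}) atTop (𝓝 0)) :
    Tendsto (fun N => (∫ ω, Y N ω ∂μ) / d N) atTop (𝓝 1) := by
  have hbounds : ∀ᶠ N in atTop, Integrable (Y N) μ ∧ ∫ ω, Y N ω ∂μ ≤ d N + w N + K N / r N :=
    (hr.and hupper).mono fun N ⟨hrN, hN⟩ =>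
      integrable_and_integral_le_of_measureReal_lt_le (hYm N) (hY0 N) hrN hN
  have hlo : Tendsto (fun N => (1 - w N / d N) * (1 - μ.real {ω | Y N ω < d N - w N}))
      atTop (𝓝 1) := by
    simpa using ((tendsto_const_nhds (x := (1 : ℝ))).sub hwd).mul
      ((tendsto_const_nhds (x := (1 : ℝ))).sub hlower)
  have hhi : Tendsto (fun N => 1 + w N / d N + K N / r N / d N) atTop (𝓝 1) := by
    simpa using ((tendsto_const_nhds (x := (1 : ℝ))).add hwd).add (hKr.div_atTop hd)
  refine tendsto_of_tendsto_of_tendsto_of_le_of_le' hlo hhi ?_ ?_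
  · filter_upwards [hbounds, hd.eventually_gt_atTop 0] with N hN hdN
    have hmarkov := mul_meas_ge_le_integral_of_nonneg (.of_forall (hY0 N)) hN.1 (d N - w N)
    have hcompl : μ.real {ω | d N - w N ≤ Y N ω} = 1 - μ.real {ω | Y N ω < d N - w N} := by
      rw [← probReal_compl_eq_one_sub (measurableSet_lt (hYm N) measurable_const)]
      congr 1
      ext ω
      simp
    rw [le_div_iff₀ hdN]
    calc (1 - w N / d N) * (1 - μ.real {ω | Y N ω < d N - w N}) * d N
        = (d N - w N) * μ.real {ω | d N - w N ≤ Y N ω} := by rw [hcompl]; field_simp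
      _ ≤ _ := hmarkov
  · filter_upwards [hbounds, hd.eventually_gt_atTop 0] with N hN hdN
    rw [div_le_iff₀ hdN]
    calc ∫ ω, Y N ω ∂μ ≤ d N + w N + K N / r N := hN.2
      _ = (1 + w N / d N + K N / r N / d N) * d N := by field_simp

end IntegralBounds

section TruncLogMax

variable {Ω : Type*} [MeasurableSpace Ω] {μ : Measure Ω} [IsProbabilityMeasure μ]
  {h : ℕ → Ω → ℝ} {F : ℝ → ℝ} {N : ℕ} {lam : ℝ}

lemma measureReal_lt_truncLog_maxOver_le (hmeas : ∀ i, Measurable (h i))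
    (hcdf : ∀ i x, (μ {ω | h i ω ≤ x}).toReal = F x) (hN : 1 ≤ N) (hlam : 0 < lam) {y : ℝ}
    (hy : 0 ≤ y) :
    μ.real {ω | y < truncLog (maxOver h N ω / lam)} ≤ N * (1 - F (lam * exp y)) := by
  have hset : {ω | y < truncLog (maxOver h N ω / lam)} = {ω | lam * exp y < maxOver h N ω} := by
    ext ω
    rw [Set.mem_ofPred_eq, Set.mem_ofPred_eq, lt_truncLog_iff hy, lt_div_iff₀ hlam, mul_comm]
  rw [hset]
  exact measureReal_lt_maxOver_le hmeas hcdf hN _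

lemma measureReal_truncLog_maxOver_lt_le (hindep : iIndepFun h μ)
    (hcdf : ∀ i x, (μ {ω | h i ω ≤ x}).toReal = F x) (hN : 1 ≤ N) (hlam : 0 < lam) {b : ℝ}
    (hb : 0 < b) :
    μ.real {ω | truncLog (maxOver h N ω / lam) < b} ≤ exp (-(N * (1 - F (lam * exp b)))) := by
  set x := lam * exp b
  have hsub : {ω | truncLog (maxOver h N ω / lam) < b} ⊆ {ω | maxOver h N ω ≤ x} := by
    intro ω hω
    rw [Set.mem_ofPred_eq, truncLog_lt_iff hb, div_lt_iff₀ hlam, mul_comm] at hω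
    exact hω.le
  have hF0 : 0 ≤ F x := hcdf 0 x ▸ ENNReal.toReal_nonneg
  calc μ.real {ω | truncLog (maxOver h N ω / lam) < b}
      ≤ μ.real {ω | maxOver h N ω ≤ x} := measureReal_mono hsub
    _ = F x ^ N := measureReal_maxOver_le hindep hcdf hN x
    _ ≤ exp (-(1 - F x)) ^ N := by gcongr; linarith [add_one_le_exp (-(1 - F x))]
    _ = exp (-(N * (1 - F x))) := by rw [← exp_nat_mul]; ring_nf

end TruncLogMax

section Scaling

variable {α β n lam : ℝ}

/-- `d_N`: as `1 - F x ≈ exp (-β x^n)`, the maximum of `N` samples is about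
`(log (α N) / β)^(1/n)`. -/
noncomputable def logMaxScale (α β n lam : ℝ) (N : ℕ) : ℝ :=
  log ((1 / lam) * (log (α * N) / β) ^ (1 / n))

lemma tendsto_log_mul_natCast_atTop (hα : 0 < α) :
    Tendsto (fun N : ℕ => log (α * N)) atTop atTop :=
  tendsto_log_atTop.comp (tendsto_natCast_atTop_atTop.const_mul_atTop hα)

lemma tendsto_logMaxScale (hα : 0 < α) (hβ : 0 < β) (hn : 0 < n) (hlam : 0 < lam) :
    Tendsto (logMaxScale α β n lam) atTop atTop := by
  have hlog := tendsto_log_mul_natCast_atTop hα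
  have hloglog := tendsto_log_atTop.comp (hlog.atTop_div_const hβ)
  refine (tendsto_atTop_add_const_left _ (log (1 / lam))
    (hloglog.const_mul_atTop (one_div_pos.mpr hn))).congr' ?_
  filter_upwards [hlog.eventually_gt_atTop 0] with N hN
  rw [logMaxScale, log_mul (by positivity) (by positivity), log_rpow (by positivity),
    Function.comp_apply]

lemma mul_rpow_exp_logMaxScale_add (hβ : 0 < β) (hn : 0 < n) (hlam : 0 < lam) {N : ℕ}
    (hN : 0 < log (α * N)) (s : ℝ) :
    β * (lam * exp (logMaxScale α β n lam N + s)) ^ n = log (α * N) * exp (n * s) := by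
  have hq : 0 < log (α * N) / β := div_pos hN hβ
  rw [exp_add, logMaxScale, exp_log (by positivity), ← mul_assoc, ← mul_assoc,
    mul_one_div_cancel hlam.ne', one_mul, mul_rpow (by positivity) (exp_pos _).le,
    ← rpow_mul hq.le, one_div_mul_cancel hn.ne', rpow_one, ← exp_mul, mul_comm s n]
  field_simp

end Scaling

lemma tendsto_sub_sqrt_atTop : Tendsto (fun x : ℝ => x - √x) atTop atTop := by
  refine (tendsto_sqrt_atTop.atTop_mul_atTop₀
    (tendsto_atTop_add_const_right _ (-1) tendsto_sqrt_atTop)).congr' ?_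
  filter_upwards [eventually_ge_atTop 0] with x hx
  rw [mul_add, mul_self_sqrt hx]
  ring

section Concentration

variable {Ω : Type*} [MeasurableSpace Ω] {μ : Measure Ω} [IsProbabilityMeasure μ]
  {h : ℕ → Ω → ℝ} {F : ℝ → ℝ} {α β n lam : ℝ} {w : ℕ → ℝ}

lemma eventually_measureReal_lt_truncLog_maxOver_le (hmeas : ∀ i, Measurable (h i))
    (hcdf : ∀ i x, (μ {ω | h i ω ≤ x}).toReal = F x) (hα : 0 < α) (hβ : 0 < β) (hn : 0 < n)
    (hlam : 0 < lam) (hFup : ∀ᶠ x in atTop, 1 - F x ≤ exp (-(β / 2) * x ^ n))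
    (hw : Tendsto w atTop atTop) :
    ∀ᶠ N in atTop, ∀ t > 0,
      μ.real {ω | logMaxScale α β n lam N + w N + t < truncLog (maxOver h N ω / lam)} ≤
        (α ^ 2 * N)⁻¹ * exp (-(2 * n * log (α * N)) * t) := by
  obtain ⟨x₀, hx₀⟩ := eventually_atTop.mp hFup
  have hdw := (tendsto_logMaxScale hα hβ hn hlam).atTop_add_atTop hw
  filter_upwards [eventually_ge_atTop 1, (tendsto_log_mul_natCast_atTop hα).eventually_gt_atTop 0,
    (tendsto_exp_atTop.comp (hw.const_mul_atTop hn)).eventually_ge_atTop 4,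
    ((tendsto_exp_atTop.comp hdw).const_mul_atTop hlam).eventually_ge_atTop x₀,
    hdw.eventually_ge_atTop 0] with N hN ha hw4 hx₀N hdw0 t ht
  set a := log (α * N)
  set y := logMaxScale α β n lam N + w N + t
  simp only [Function.comp_apply] at hw4 hx₀N
  have hy : x₀ ≤ lam * exp y :=
    hx₀N.trans (mul_le_mul_of_nonneg_left (exp_le_exp.mpr (by linarith)) hlam.le)
  -- `β x^n = a e^{n w} e^{n t} ≥ 4 a (1 + n t)` at the level `x = λ e^y`
  have hexponent : -(β / 2) * (lam * exp y) ^ n ≤ -2 * a + -(2 * n * a) * t := by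
    have hscale := mul_rpow_exp_logMaxScale_add hβ hn hlam ha (w N + t)
    rw [← add_assoc, mul_add, exp_add (n * w N)] at hscale
    change β * (lam * exp y) ^ n = a * (exp (n * w N) * exp (n * t)) at hscale
    nlinarith [mul_nonneg (mul_nonneg ha.le (sub_nonneg.mpr hw4)) (exp_pos (n * t)).le,
      mul_nonneg ha.le (sub_nonneg.mpr (add_one_le_exp (n * t)))]
  have hNa : (N : ℝ) * exp (-2 * a) = (α ^ 2 * N)⁻¹ := by
    have hαN : 0 < α * N := by positivity
    rw [show -2 * a = -a + -a by ring, exp_add, exp_neg, exp_log hαN]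
    field_simp
  calc μ.real {ω | y < truncLog (maxOver h N ω / lam)}
      ≤ N * (1 - F (lam * exp y)) :=
        measureReal_lt_truncLog_maxOver_le hmeas hcdf hN hlam (by linarith)
    _ ≤ N * exp (-(β / 2) * (lam * exp y) ^ n) := by gcongr; exact hx₀ _ hy
    _ ≤ N * exp (-2 * a + -(2 * n * a) * t) := by gcongr
    _ = (α ^ 2 * N)⁻¹ * exp (-(2 * n * a) * t) := by rw [exp_add, ← mul_assoc, hNa]

lemma tendsto_measureReal_truncLog_maxOver_lt (hindep : iIndepFun h μ)
    (hcdf : ∀ i x, (μ {ω | h i ω ≤ x}).toReal = F x) (hα : 0 < α) (hβ : 0 < β) (hn : 0 < n)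
    (hlam : 0 < lam) (hFlow : ∀ᶠ x in atTop, exp (-(2 * β) * x ^ n) ≤ 1 - F x)
    (hw : Tendsto w atTop atTop)
    (hdw : Tendsto (fun N => logMaxScale α β n lam N - w N) atTop atTop) :
    Tendsto (fun N => μ.real {ω | truncLog (maxOver h N ω / lam) < logMaxScale α β n lam N - w N})
      atTop (𝓝 0) := by
  have hg : Tendsto (fun N : ℕ => exp ((log N - log α) / 2)) atTop atTop :=
    tendsto_exp_atTop.comp (((tendsto_log_atTop.comp tendsto_natCast_atTop_atTop).atTop_add
      tendsto_const_nhds).atTop_div_const two_pos)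
  refine squeeze_zero' (.of_forall fun N => measureReal_nonneg) ?_
    (tendsto_exp_atBot.comp (tendsto_neg_atTop_atBot.comp hg))
  filter_upwards [eventually_ge_atTop 1, (tendsto_log_mul_natCast_atTop hα).eventually_gt_atTop 0,
    (tendsto_exp_atTop.comp (hw.const_mul_atTop hn)).eventually_ge_atTop 4,
    ((tendsto_exp_atTop.comp hdw).const_mul_atTop hlam).eventually hFlow,
    hdw.eventually_gt_atTop 0] with N hN ha hw4 hF hdw0
  set a := log (α * N)
  set x := lam * exp (logMaxScale α β n lam N - w N)
  refine (measureReal_truncLog_maxOver_lt_le hindep hcdf hN hlam hdw0).trans ?_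
  simp only [Function.comp_apply, exp_le_exp, neg_le_neg_iff] at hw4 hF ⊢
  -- `β x^n = a e^{-n w} ≤ a / 4` at the level `x = λ e^{d - w}`
  have hexponent : -(a / 2) ≤ -(2 * β) * x ^ n := by
    have hscale := mul_rpow_exp_logMaxScale_add hβ hn hlam ha (-w N)
    rw [← sub_eq_add_neg] at hscale
    have hinv : exp (n * -w N) * exp (n * w N) = 1 := by rw [← exp_add]; simp
    nlinarith [exp_pos (n * -w N)]
  have hNpos : (0 : ℝ) < N := by exact_mod_cast hN
  calc exp ((log N - log α) / 2) = N * exp (-(a / 2)) := by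
        rw [show a = log α + log N from log_mul hα.ne' hNpos.ne', ← exp_log hNpos, ← exp_add,
          log_exp]
        ring_nf
    _ ≤ N * exp (-(2 * β) * x ^ n) := by gcongr
    _ ≤ N * (1 - F x) := by gcongr

end Concentration

theorem truncated_log_max_scaling_general
    {Ω : Type*} [MeasurableSpace Ω] (μ : Measure Ω) [IsProbabilityMeasure μ]
    (h : ℕ → Ω → ℝ) (hmeas : ∀ i, Measurable (h i))
    (hindep : iIndepFun h μ)
    (F : ℝ → ℝ) (hcdf : ∀ i x, (μ {ω | h i ω ≤ x}).toReal = F x)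
    (α β n l : ℝ) (hα : 0 < α) (hβ : 0 < β) (hn : 0 < n)
    (H : ℝ → ℝ)
    (hHo : H =o[atTop] fun x => x ^ n)
    (htail : Tendsto
      (fun x => (1 - F x) / (α * x ^ l * Real.exp (-β * x ^ n + H x)))
      atTop (𝓝 1))
    (lam : ℝ) (hlam : 0 < lam) :
    Tendsto (fun N : ℕ =>
      (∫ ω, (if 1 ≤ maxOver h N ω / lam then Real.log (maxOver h N ω / lam) else 0) ∂μ) /
        Real.log ((1 / lam) * (Real.log (α * N) / β) ^ (1 / n)))
      atTop (𝓝 1) := by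
  show Tendsto (fun N => (∫ ω, truncLog (maxOver h N ω / lam) ∂μ) / logMaxScale α β n lam N)
    atTop (𝓝 1)
  have hd := tendsto_logMaxScale hα hβ hn hlam
  have hw : Tendsto (fun N => √(logMaxScale α β n lam N)) atTop atTop := tendsto_sqrt_atTop.comp hd
  have hwd : Tendsto (fun N => √(logMaxScale α β n lam N) / logMaxScale α β n lam N) atTop (𝓝 0) :=
    by simpa only [sqrt_div_self, Function.comp_def] using tendsto_inv_atTop_zero.comp hw
  have hr : Tendsto (fun N : ℕ => 2 * n * log (α * N)) atTop atTop :=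
    (tendsto_log_mul_natCast_atTop hα).const_mul_atTop (by positivity)
  have hK : Tendsto (fun N : ℕ => (α ^ 2 * N)⁻¹) atTop (𝓝 0) :=
    tendsto_inv_atTop_zero.comp (tendsto_natCast_atTop_atTop.const_mul_atTop (by positivity))
  have hFup : ∀ᶠ x in atTop, 1 - F x ≤ exp (-(β / 2) * x ^ n) := by
    simpa only [sub_half] using eventually_tail_le_exp hα hn hHo htail (half_pos hβ)
  have hFlow : ∀ᶠ x in atTop, exp (-(2 * β) * x ^ n) ≤ 1 - F x := by
    simpa only [two_mul] using eventually_exp_le_tail hα hn hHo htail hβ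
  exact tendsto_integral_div_of_concentration
    (fun N => measurable_truncLog.comp ((measurable_maxOver hmeas N).div_const lam))
    (fun N ω => truncLog_nonneg _) hd hwd (hr.eventually_gt_atTop 0) (hK.div_atTop hr)
    (eventually_measureReal_lt_truncLog_maxOver_le hmeas hcdf hα hβ hn hlam hFup hw)
    (tendsto_measureReal_truncLog_maxOver_lt hindep hcdf hα hβ hn hlam hFlow hw
      (tendsto_sub_sqrt_atTop.comp hd))

/-- For `X*_N = (1/λ) max_i h_i` with i.i.d. `h i` having a class-𝒞 double-exponential
tail, the truncated expected log `R̃(N) = E[log(X*_N) 1{X*_N ≥ 1}]` satisfies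
`R̃(N) / log((1/λ)(log(α N)/β)^(1/n)) → 1`. -/
theorem truncated_log_max_scaling
    {Ω : Type*} [MeasurableSpace Ω] (μ : Measure Ω) [IsProbabilityMeasure μ]
    (h : ℕ → Ω → ℝ) (hmeas : ∀ i, Measurable (h i)) (hnn : ∀ i ω, 0 ≤ h i ω)
    (hindep : iIndepFun h μ)
    (F : ℝ → ℝ) (hcdf : ∀ i x, (μ {ω | h i ω ≤ x}).toReal = F x)
    (α β n l : ℝ) (hα : 0 < α) (hβ : 0 < β) (hn : 0 < n)
    (H : ℝ → ℝ)
    (hslow : ∀ a > (0 : ℝ), Tendsto (fun x => H (a * x) / H x) atTop (𝓝 1))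
    (hHo : H =o[atTop] fun x => x ^ n)
    (htail : Tendsto
      (fun x => (1 - F x) / (α * x ^ l * Real.exp (-β * x ^ n + H x)))
      atTop (𝓝 1))
    (lam : ℝ) (hlam : 0 < lam) :
    Tendsto (fun N : ℕ =>
      (∫ ω, (if 1 ≤ maxOver h N ω / lam then Real.log (maxOver h N ω / lam) else 0) ∂μ) /
        Real.log ((1 / lam) * (Real.log (α * N) / β) ^ (1 / n)))
      atTop (𝓝 1) :=
  truncated_log_max_scaling_general μ h hmeas hindep F hcdf α β n l hα hβ hn H hHo htail lam hlam
end

section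
/- Let $g_1,\dots,g_N$ be i.i.d. with CDF $F_g$ in class $\mathcal{C}$ (in particular $F_g(\epsilon)>0$ for all $\epsilon>0$ and $1-F_g(x)$ decays double-exponentially), and let $K_N=o(N)$. Then $\lim_{N\to\infty}\mathbb{E}[g_{K_N:N}]=0$, where $g_{K_N:N}$ is the $K_N$-th smallest order statistic. -/
open MeasureTheory ProbabilityTheory Filter Real Set Topology

open scoped Classical in
/-- The `K`-th smallest value among `g 1, ..., g N`. -/
noncomputable def orderStat {Ω : Type*} (g : ℕ → Ω → ℝ) (N K : ℕ) (ω : Ω) : ℝ :=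
  sInf {x : ℝ | K ≤ ((Finset.Icc 1 N).filter (fun i => g i ω ≤ x)).card}

/-!
Fix a level `ε > 0` and let `A` be the event that fewer than `K` of `g 1, …, g N` are `≤ ε`.
Off `A` the order statistic is `≤ ε`. On `A` it is at most `∑ i, max (g i) 0`, and for each `i`
the event `A` forces some `N - K` indices other than `i` above `ε`; by independence this gives
`E[(g i)⁺; A] ≤ C(N, K) (1 - F ε) ^ (N - K) E[(g i)⁺]`. The stretched-exponential tail makes
`E[(g i)⁺]` finite, and since `F ε > 0` and `K = o(N)`, the factor `N C(N, K) (1 - F ε) ^ (N - K)`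
tends to `0`.
-/

open Asymptotics

theorem isLittleO_stretchedExp_rpow {α β n l : ℝ} (hβ : 0 < β) (hn : 0 < n) {H : ℝ → ℝ}
    (hH : H =o[atTop] fun x => x ^ n) (m : ℝ) :
    (fun x => α * x ^ l * exp (-β * x ^ n + H x)) =o[atTop] fun x => x ^ m := by
  have hexp : Tendsto (fun x => (l - m) * log x + (-β * x ^ n + H x)) atTop atBot := by
    have hlim : Tendsto (fun x => (l - m) * (log x / x ^ n) - β + H x / x ^ n) atTop (𝓝 (-β)) := by
      have h1 := ((isLittleO_log_rpow_atTop hn).tendsto_div_nhds_zero).const_mul (l - m)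
      have h2 := hH.tendsto_div_nhds_zero
      simpa using (h1.sub_const β).add h2
    refine (hlim.neg_mul_atTop (neg_lt_zero.2 hβ) (tendsto_rpow_atTop hn)).congr' ?_
    filter_upwards [eventually_gt_atTop 0] with x hx
    field_simp
    ring
  refine isLittleO_of_tendsto' ?_ ?_
  · filter_upwards [eventually_gt_atTop 0] with x hx h
    exact absurd h (rpow_pos_of_pos hx m).ne'
  · have := (tendsto_exp_atBot.comp hexp).const_mul α
    rw [mul_zero] at this
    refine this.congr' ?_
    filter_upwards [eventually_gt_atTop 0] with x hx
    have hpow : exp ((l - m) * log x) = x ^ l / x ^ m := by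
      rw [mul_comm, ← rpow_def_of_pos hx, rpow_sub hx]
    rw [Function.comp_apply, exp_add, hpow]
    ring

theorem eventually_le_rpow_neg_two_of_tendsto_div_stretchedExp {f : ℝ → ℝ} {α β n l : ℝ}
    (hβ : 0 < β) (hn : 0 < n) {H : ℝ → ℝ} (hH : H =o[atTop] fun x => x ^ n)
    (hf : Tendsto (fun x => f x / (α * x ^ l * exp (-β * x ^ n + H x))) atTop (𝓝 1)) :
    ∀ᶠ x in atTop, f x ≤ x ^ (-2 : ℝ) := by
  have := ((isEquivalent_of_tendsto_one hf).trans_isLittleO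
    (isLittleO_stretchedExp_rpow hβ hn hH (-2))).bound one_pos
  filter_upwards [this, eventually_gt_atTop 0] with x hx hx0
  rw [one_mul, norm_of_nonneg (rpow_pos_of_pos hx0 _).le] at hx
  exact (le_abs_self _).trans hx

theorem choose_mul_pow_mul_pow_le_add_pow {R : Type*} [CommSemiring R] [PartialOrder R]
    [IsOrderedRing R] {x y : R} (hx : 0 ≤ x) (hy : 0 ≤ y) {N k : ℕ} (hk : k ≤ N) :
    (N.choose k : R) * x ^ k * y ^ (N - k) ≤ (x + y) ^ N := by
  rw [add_pow]
  calc (N.choose k : R) * x ^ k * y ^ (N - k) = x ^ k * y ^ (N - k) * N.choose k := by ring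
    _ ≤ ∑ m ∈ Finset.range (N + 1), x ^ m * y ^ (N - m) * N.choose m :=
      Finset.single_le_sum (f := fun m => x ^ m * y ^ (N - m) * (N.choose m : R))
        (fun m _ => by positivity) (Finset.mem_range.2 (Nat.lt_succ_of_le hk))

theorem tendsto_natCast_mul_pow_mul_pow_sub {a r : ℝ} (ha : 0 < a) (hr0 : 0 < r) (hr1 : r < 1)
    {K : ℕ → ℕ} (hK : ∀ N, K N ≤ N) (hKo : Tendsto (fun N : ℕ => (K N : ℝ) / N) atTop (𝓝 0)) :
    Tendsto (fun N : ℕ => (N : ℝ) * a ^ K N * r ^ (N - K N)) atTop (𝓝 0) := by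
  set d : ℕ → ℝ := fun N => log N / N + (K N : ℝ) / N * log a + (1 - (K N : ℝ) / N) * log r
  have hd : Tendsto d atTop (𝓝 (log r)) := by
    have hlog : Tendsto (fun x : ℝ => log x / x) atTop (𝓝 0) := by
      simpa using (isLittleO_log_rpow_atTop one_pos).tendsto_div_nhds_zero
    have h1 : Tendsto (fun N : ℕ => log N / N) atTop (𝓝 0) :=
      hlog.comp tendsto_natCast_atTop_atTop
    simpa using (h1.add (hKo.mul_const (log a))).add ((hKo.const_sub 1).mul_const (log r))
  have hexp : Tendsto (fun N : ℕ => exp (d N * N)) atTop (𝓝 0) :=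
    tendsto_exp_atBot.comp (hd.neg_mul_atTop (log_neg hr0 hr1) tendsto_natCast_atTop_atTop)
  refine hexp.congr' ?_
  filter_upwards [eventually_ge_atTop 1] with N hN
  have hN0 : (0 : ℝ) < N := by exact_mod_cast hN
  have hdN : d N * N = log N + K N * log a + ((N - K N : ℕ) : ℝ) * log r := by
    simp only [d]
    rw [Nat.cast_sub (hK N)]
    field_simp
  rw [hdN, exp_add, exp_add, exp_log hN0, ← log_pow, exp_log (by positivity), ← log_pow,
    exp_log (by positivity)]

theorem tendsto_natCast_mul_choose_mul_pow_sub {q : ℝ} (hq0 : 0 ≤ q) (hq1 : q < 1)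
    {K : ℕ → ℕ} (hK : ∀ N, K N ≤ N) (hKo : Tendsto (fun N : ℕ => (K N : ℝ) / N) atTop (𝓝 0)) :
    Tendsto (fun N : ℕ => (N : ℝ) * N.choose (K N) * q ^ (N - K N)) atTop (𝓝 0) := by
  -- `q = r * y` with `r < 1`, and weighting by `s = 1 - y > 0` gives the entropy bound
  -- `C(N, K) y ^ (N - K) ≤ s ^ (-K)`.
  obtain ⟨r, hqr, hr1⟩ := exists_between hq1
  have hr0 : 0 < r := hq0.trans_lt hqr
  set y : ℝ := q / r
  have hy0 : 0 ≤ y := by positivity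
  have hy1 : y < 1 := (div_lt_one hr0).2 hqr
  set s : ℝ := 1 - y
  have hs : 0 < s := by linarith
  refine squeeze_zero (fun N => by positivity) (fun N => ?_)
    (tendsto_natCast_mul_pow_mul_pow_sub (one_div_pos.2 hs) hr0 hr1 hK hKo)
  have hbin := choose_mul_pow_mul_pow_le_add_pow hs.le hy0 (hK N)
  rw [sub_add_cancel, one_pow] at hbin
  have hchoose : (N.choose (K N) : ℝ) * y ^ (N - K N) ≤ (1 / s) ^ K N := by
    rw [one_div_pow, le_div_iff₀ (by positivity)]
    calc _ = (N.choose (K N) : ℝ) * s ^ K N * y ^ (N - K N) := by ring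
      _ ≤ 1 := hbin
  calc (N : ℝ) * N.choose (K N) * q ^ (N - K N)
      = N * (N.choose (K N) * y ^ (N - K N)) * r ^ (N - K N) := by
        rw [show q = y * r from (div_mul_cancel₀ q hr0.ne').symm, mul_pow]; ring
    _ ≤ N * (1 / s) ^ K N * r ^ (N - K N) := by gcongr

theorem setLIntegral_Ioi_ofReal_ne_top {f : ℝ → ℝ} (h1 : ∀ t, f t ≤ 1)
    (h2 : ∀ᶠ t in atTop, f t ≤ t ^ (-2 : ℝ)) :
    ∫⁻ t in Ioi 0, ENNReal.ofReal (f t) ≠ ⊤ := by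
  obtain ⟨T₀, hT₀⟩ := eventually_atTop.1 h2
  set T := max T₀ 1
  have hT : 0 < T := zero_lt_one.trans_le (le_max_right _ _)
  rw [← Ioc_union_Ioi_eq_Ioi hT.le]
  refine ((lintegral_union_le _ _ _).trans_lt (ENNReal.add_lt_top.2 ⟨?_, ?_⟩)).ne
  · exact setLIntegral_lt_top_of_le_nnreal (by simp) ⟨1, fun t _ => by simpa using h1 t⟩
  · refine (setLIntegral_mono' measurableSet_Ioi fun t ht => ENNReal.ofReal_le_ofReal
      (hT₀ t ((le_max_left _ _).trans ht.le))).trans_lt ?_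
    exact (integrableOn_Ioi_rpow_of_lt (by norm_num) hT).setLIntegral_lt_top

theorem setIntegral_le_sum_of_subset_biUnion {α ι : Type*} [MeasurableSpace α] {μ : Measure α}
    {f : α → ℝ} (hf0 : ∀ a, 0 ≤ f a) (hf : Integrable f μ) {A : Set α} (hA : MeasurableSet A)
    {s : Finset ι} {B : ι → Set α} (hB : ∀ j, MeasurableSet (B j)) (hAB : A ⊆ ⋃ j ∈ s, B j) :
    ∫ a in A, f a ∂μ ≤ ∑ j ∈ s, ∫ a in B j, f a ∂μ := by
  simp_rw [← integral_indicator hA, ← integral_indicator (hB _)]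
  rw [← integral_finsetSum _ fun j _ => hf.indicator (hB j)]
  refine integral_mono (hf.indicator hA) (integrable_finsetSum _ fun j _ => hf.indicator (hB j))
    fun a => ?_
  have hsum_nonneg : ∀ j ∈ s, 0 ≤ (B j).indicator f a :=
    fun j _ => Set.indicator_nonneg (fun a _ => hf0 a) a
  by_cases ha : a ∈ A
  · obtain ⟨j, hj, haj⟩ := Set.mem_iUnion₂.1 (hAB ha)
    rw [Set.indicator_of_mem ha, ← Set.indicator_of_mem haj f]
    exact Finset.single_le_sum hsum_nonneg hj
  · rw [Set.indicator_of_notMem ha]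
    exact Finset.sum_nonneg hsum_nonneg

section OrderStatistic

variable {Ω : Type*} (g : ℕ → Ω → ℝ) (N : ℕ) (ω : Ω)

noncomputable def countLE (x : ℝ) : ℕ := ((Finset.Icc 1 N).filter (fun i => g i ω ≤ x)).card

variable {g N ω}

theorem card_filter_lt_eq_sub_countLE (x : ℝ) :
    ((Finset.Icc 1 N).filter (fun i => x < g i ω)).card = N - countLE g N ω x := by
  have := Finset.card_filter_add_card_filter_not (s := Finset.Icc 1 N) (p := fun i => g i ω ≤ x)
  simp only [not_le, Nat.card_Icc, add_tsub_cancel_right] at this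
  unfold countLE
  omega

theorem exists_le_of_pos_countLE {x : ℝ} (h : 0 < countLE g N ω x) :
    ∃ i ∈ Finset.Icc 1 N, g i ω ≤ x := by
  obtain ⟨i, hi⟩ := Finset.card_pos.1 h
  exact ⟨i, (Finset.mem_filter.1 hi).1, (Finset.mem_filter.1 hi).2⟩

theorem countLE_eq_of_forall_le {x : ℝ} (h : ∀ i ∈ Finset.Icc 1 N, g i ω ≤ x) :
    countLE g N ω x = N := by
  rw [countLE, Finset.filter_true_of_mem h, Nat.card_Icc, add_tsub_cancel_right]

theorem orderStat_le_iff {K : ℕ} (hK1 : 1 ≤ K) (hKN : K ≤ N) {x : ℝ} :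
    orderStat g N K ω ≤ x ↔ K ≤ countLE g N ω x := by
  have hN : (Finset.Icc 1 N).Nonempty := Finset.nonempty_Icc.2 (hK1.trans hKN)
  have hbdd : BddBelow {x | K ≤ countLE g N ω x} := by
    refine ⟨(Finset.Icc 1 N).inf' hN (g · ω), fun s hs => ?_⟩
    obtain ⟨i, hi, his⟩ := exists_le_of_pos_countLE (hK1.trans hs)
    exact (Finset.inf'_le _ hi).trans his
  have hnonempty : {x | K ≤ countLE g N ω x}.Nonempty :=
    ⟨(Finset.Icc 1 N).sup' hN (g · ω),
      hKN.trans_eq (countLE_eq_of_forall_le fun i hi => Finset.le_sup' (g · ω) hi).symm⟩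
  refine ⟨fun h => ?_, fun h => csInf_le hbdd h⟩
  by_contra! hx
  -- Between `x` and the smallest value above `x` the count does not change.
  have hne : ((Finset.Icc 1 N).filter (fun i => x < g i ω)).Nonempty := by
    rw [← Finset.card_pos, card_filter_lt_eq_sub_countLE]
    omega
  set m := ((Finset.Icc 1 N).filter (fun i => x < g i ω)).inf' hne (g · ω)
  have hxm : x < m := (Finset.lt_inf'_iff _).2 fun i hi => (Finset.mem_filter.1 hi).2
  have hmS : ∀ s ∈ {x | K ≤ countLE g N ω x}, m ≤ s := by
    intro s hs
    by_contra! hsm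
    have hsub : (Finset.Icc 1 N).filter (fun i => g i ω ≤ s) ⊆
        (Finset.Icc 1 N).filter (fun i => g i ω ≤ x) := by
      intro i hi
      rw [Finset.mem_filter] at hi ⊢
      refine ⟨hi.1, not_lt.1 fun hxi => ?_⟩
      exact (Finset.inf'_le (g · ω) (Finset.mem_filter.2 ⟨hi.1, hxi⟩)).not_gt (hi.2.trans_lt hsm)
    exact (Finset.card_le_card hsub).not_gt (hx.trans_le hs)
  exact h.not_gt (hxm.trans_le (le_csInf hnonempty hmS))

theorem orderStat_nonneg {K : ℕ} (hK1 : 1 ≤ K) (hg : ∀ i ∈ Finset.Icc 1 N, 0 ≤ g i ω) :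
    0 ≤ orderStat g N K ω :=
  Real.sInf_nonneg fun _ hs =>
    let ⟨i, hi, his⟩ := exists_le_of_pos_countLE (hK1.trans hs)
    (hg i hi).trans his

theorem orderStat_le_sum_posPart {K : ℕ} (hK1 : 1 ≤ K) (hKN : K ≤ N) :
    orderStat g N K ω ≤ ∑ i ∈ Finset.Icc 1 N, max (g i ω) 0 := by
  refine (orderStat_le_iff hK1 hKN).2 (hKN.trans_eq (countLE_eq_of_forall_le fun i hi => ?_).symm)
  exact (le_max_left _ _).trans
    (Finset.single_le_sum (f := fun j => max (g j ω) 0) (fun _ _ => le_max_right _ _) hi)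

theorem exists_powersetCard_erase_lt {K : ℕ} (hKN : K ≤ N) {x : ℝ} (hx : countLE g N ω x < K)
    (i : ℕ) : ∃ T ∈ ((Finset.Icc 1 N).erase i).powersetCard (N - K), ∀ j ∈ T, x < g j ω := by
  set U := (Finset.Icc 1 N).filter (fun j => x < g j ω)
  have hU : N - K ≤ (U.erase i).card := by
    have := Finset.pred_card_le_card_erase (a := i) (s := U)
    rw [card_filter_lt_eq_sub_countLE] at this
    omega
  obtain ⟨T, hTU, hT⟩ := Finset.exists_subset_card_eq hU
  refine ⟨T, Finset.mem_powersetCard.2 ⟨hTU.trans (Finset.erase_subset_erase i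
    (Finset.filter_subset _ _)), hT⟩, fun j hj => ?_⟩
  exact (Finset.mem_filter.1 (Finset.mem_of_mem_erase (hTU hj))).2

end OrderStatistic

section Measurability

variable {Ω : Type*} [MeasurableSpace Ω] {μ : Measure Ω} {g : ℕ → Ω → ℝ}

theorem measurable_countLE (hg : ∀ i, Measurable (g i)) (N : ℕ) (x : ℝ) :
    Measurable fun ω => countLE g N ω x := by
  simp only [countLE, Finset.card_filter]
  exact Finset.measurable_sum _ fun i _ =>
    Measurable.ite (measurableSet_le (hg i) measurable_const) measurable_const measurable_const

theorem measurable_orderStat (hg : ∀ i, Measurable (g i)) {N K : ℕ} (hK1 : 1 ≤ K)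
    (hKN : K ≤ N) : Measurable (orderStat g N K) := by
  refine measurable_of_Iic fun x => ?_
  have : orderStat g N K ⁻¹' Iic x = (fun ω => countLE g N ω x) ⁻¹' Ici K := by
    ext ω
    exact orderStat_le_iff hK1 hKN
  rw [this]
  exact measurable_countLE hg N x measurableSet_Ici

theorem integrable_orderStat (hmeas : ∀ i, Measurable (g i))
    (hpos : ∀ i, ∀ᵐ ω ∂μ, 0 ≤ g i ω) (hint : ∀ i, Integrable (fun ω => max (g i ω) 0) μ)
    {N K : ℕ} (hK1 : 1 ≤ K) (hKN : K ≤ N) : Integrable (orderStat g N K) μ := by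
  refine (integrable_finsetSum (Finset.Icc 1 N) fun i _ => hint i).mono'
    (measurable_orderStat hmeas hK1 hKN).aestronglyMeasurable ?_
  filter_upwards [ae_all_iff.2 hpos] with ω hω
  rw [norm_of_nonneg (orderStat_nonneg hK1 fun i _ => hω i)]
  exact orderStat_le_sum_posPart hK1 hKN

end Measurability

theorem ProbabilityTheory.iIndepFun.indep_biSup_comap {Ω ι β : Type*} [MeasurableSpace Ω]
    {μ : Measure Ω} [mβ : MeasurableSpace β] {f : ι → Ω → β} (hf : iIndepFun f μ)
    (hmeas : ∀ i, Measurable (f i)) {i : ι} {T : Set ι} (hiT : i ∉ T) :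
    Indep (⨆ j ∈ T, mβ.comap (f j)) (mβ.comap (f i)) μ := by
  simpa using indep_iSup_of_disjoint (fun j => (hmeas j).comap_le) hf.iIndep
    (Set.disjoint_singleton_right.2 hiT)

section CDF

variable {Ω : Type*} [MeasurableSpace Ω] {μ : Measure Ω} {g : ℕ → Ω → ℝ} {F : ℝ → ℝ}

theorem cdf_nonneg (hcdf : ∀ i x, (μ {ω | g i ω ≤ x}).toReal = F x) (x : ℝ) : 0 ≤ F x :=
  hcdf 0 x ▸ ENNReal.toReal_nonneg

variable [IsProbabilityMeasure μ]

theorem cdf_le_one (hcdf : ∀ i x, (μ {ω | g i ω ≤ x}).toReal = F x) (x : ℝ) : F x ≤ 1 :=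
  hcdf 0 x ▸ ENNReal.toReal_le_of_le_ofReal zero_le_one (by simpa using prob_le_one)

theorem measure_lt_eq_ofReal_one_sub (hmeas : ∀ i, Measurable (g i))
    (hcdf : ∀ i x, (μ {ω | g i ω ≤ x}).toReal = F x) (i : ℕ) (x : ℝ) :
    μ {ω | x < g i ω} = ENNReal.ofReal (1 - F x) := by
  have hle : μ {ω | g i ω ≤ x} = ENNReal.ofReal (F x) := by
    rw [← hcdf i x, ENNReal.ofReal_toReal (measure_ne_top μ _)]
  simp_rw [← not_le]
  rw [← Set.compl_ofPred, prob_compl_eq_one_sub (measurableSet_le (hmeas i) measurable_const),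
    hle, ENNReal.ofReal_sub 1 (cdf_nonneg hcdf x), ENNReal.ofReal_one]

theorem ae_pos_of_cdf_zero (hcdf : ∀ i x, (μ {ω | g i ω ≤ x}).toReal = F x) (hF0 : F 0 = 0)
    (i : ℕ) : ∀ᵐ ω ∂μ, 0 < g i ω := by
  have : μ {ω | g i ω ≤ 0} = 0 :=
    ((ENNReal.toReal_eq_zero_iff _).1 ((hcdf i 0).trans hF0)).resolve_right (measure_ne_top μ _)
  simpa [ae_iff] using this

theorem lintegral_ofReal_posPart_eq (hmeas : ∀ i, Measurable (g i))
    (hcdf : ∀ i x, (μ {ω | g i ω ≤ x}).toReal = F x) (i : ℕ) :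
    ∫⁻ ω, ENNReal.ofReal (max (g i ω) 0) ∂μ = ∫⁻ t in Ioi 0, ENNReal.ofReal (1 - F t) := by
  rw [lintegral_eq_lintegral_meas_lt μ (ae_of_all _ fun ω => le_max_right (g i ω) 0)
    (by fun_prop)]
  refine setLIntegral_congr_fun measurableSet_Ioi fun t (ht : 0 < t) => ?_
  simp only [lt_max_iff, ht.not_gt, or_false]
  exact measure_lt_eq_ofReal_one_sub hmeas hcdf i t

theorem integrable_posPart (hmeas : ∀ i, Measurable (g i))
    (hcdf : ∀ i x, (μ {ω | g i ω ≤ x}).toReal = F x)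
    (hfin : ∫⁻ t in Ioi 0, ENNReal.ofReal (1 - F t) ≠ ⊤) (i : ℕ) :
    Integrable (fun ω => max (g i ω) 0) μ := by
  refine ⟨by fun_prop, ?_⟩
  rw [hasFiniteIntegral_iff_ofReal (ae_of_all _ fun ω => le_max_right (g i ω) 0),
    lintegral_ofReal_posPart_eq hmeas hcdf i]
  exact hfin.lt_top

theorem integral_posPart_eq (hmeas : ∀ i, Measurable (g i))
    (hcdf : ∀ i x, (μ {ω | g i ω ≤ x}).toReal = F x) (i : ℕ) :
    ∫ ω, max (g i ω) 0 ∂μ = (∫⁻ t in Ioi 0, ENNReal.ofReal (1 - F t)).toReal := by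
  rw [integral_eq_lintegral_of_nonneg_ae (ae_of_all _ fun ω => le_max_right (g i ω) 0)
    (by fun_prop), lintegral_ofReal_posPart_eq hmeas hcdf i]

theorem setIntegral_biInter_lt_eq (hmeas : ∀ i, Measurable (g i)) (hindep : iIndepFun g μ)
    (hcdf : ∀ i x, (μ {ω | g i ω ≤ x}).toReal = F x) {i : ℕ} {T : Finset ℕ} (hiT : i ∉ T)
    (x : ℝ) {f : ℝ → ℝ} (hf : Measurable f) :
    ∫ ω in ⋂ j ∈ T, {ω | x < g j ω}, f (g i ω) ∂μ = (1 - F x) ^ T.card * ∫ ω, f (g i ω) ∂μ := by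
  have hB : MeasurableSet[⨆ j ∈ (T : Set ℕ), Real.measurableSpace.comap (g j)]
      (⋂ j ∈ T, {ω | x < g j ω}) :=
    MeasurableSet.biInter T.countable_toSet fun j hj =>
      le_iSup₂ (f := fun j (_ : j ∈ (T : Set ℕ)) => Real.measurableSpace.comap (g j))
        j hj _ ⟨Ioi x, measurableSet_Ioi, rfl⟩
  have hμB : μ.real (⋂ j ∈ T, {ω | x < g j ω}) = (1 - F x) ^ T.card := by
    rw [measureReal_def, hindep.meas_biInter (s := fun j => {ω | x < g j ω})
      fun j _ => ⟨Ioi x, measurableSet_Ioi, rfl⟩]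
    simp_rw [measure_lt_eq_ofReal_one_sub hmeas hcdf, Finset.prod_const, ENNReal.toReal_pow,
      ENNReal.toReal_ofReal (sub_nonneg.2 (cdf_le_one hcdf x))]
  rw [(hindep.indep_biSup_comap hmeas (Finset.mem_coe.not.2 hiT)).setIntegral_eq_mul
    (iSup₂_le fun j _ => (hmeas j).comap_le) (hmeas i).aemeasurable hB hf.aestronglyMeasurable,
    hμB]

end CDF

section Estimate

variable {Ω : Type*} [MeasurableSpace Ω] {μ : Measure Ω} [IsProbabilityMeasure μ]
  {g : ℕ → Ω → ℝ} {F : ℝ → ℝ}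

theorem setIntegral_countLE_lt_posPart_le (hmeas : ∀ i, Measurable (g i))
    (hindep : iIndepFun g μ) (hcdf : ∀ i x, (μ {ω | g i ω ≤ x}).toReal = F x)
    (hint : ∀ i, Integrable (fun ω => max (g i ω) 0) μ) {N K : ℕ} (hKN : K ≤ N) (x : ℝ)
    (i : ℕ) :
    ∫ ω in {ω | countLE g N ω x < K}, max (g i ω) 0 ∂μ
      ≤ N.choose K * (1 - F x) ^ (N - K) * ∫ ω, max (g i ω) 0 ∂μ := by
  set 𝒯 := ((Finset.Icc 1 N).erase i).powersetCard (N - K)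
  have hcard : (𝒯.card : ℝ) ≤ N.choose K := by
    rw [Finset.card_powersetCard, ← Nat.choose_symm hKN]
    gcongr
    exact Finset.card_erase_le.trans_eq (by simp)
  calc ∫ ω in {ω | countLE g N ω x < K}, max (g i ω) 0 ∂μ
      ≤ ∑ T ∈ 𝒯, ∫ ω in ⋂ j ∈ T, {ω | x < g j ω}, max (g i ω) 0 ∂μ := by
        refine setIntegral_le_sum_of_subset_biUnion (fun ω => le_max_right _ _) (hint i)
          (measurable_countLE hmeas N x measurableSet_Iio) (fun T => ?_) fun ω hω => ?_
        · exact .biInter T.countable_toSet fun j _ => measurableSet_lt measurable_const (hmeas j)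
        · obtain ⟨T, hT, hTx⟩ := exists_powersetCard_erase_lt hKN hω i
          exact Set.mem_iUnion₂.2 ⟨T, hT, Set.mem_iInter₂.2 hTx⟩
    _ = ∑ _T ∈ 𝒯, (1 - F x) ^ (N - K) * ∫ ω, max (g i ω) 0 ∂μ := by
        refine Finset.sum_congr rfl fun T hT => ?_
        rw [setIntegral_biInter_lt_eq (f := (max · 0)) hmeas hindep hcdf (fun hiT => ?_) x
          (by fun_prop), (Finset.mem_powersetCard.1 hT).2]
        exact Finset.notMem_erase i _ ((Finset.mem_powersetCard.1 hT).1 hiT)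
    _ ≤ N.choose K * (1 - F x) ^ (N - K) * ∫ ω, max (g i ω) 0 ∂μ := by
        rw [Finset.sum_const, nsmul_eq_mul, ← mul_assoc]
        have := sub_nonneg.2 (cdf_le_one hcdf x)
        have := integral_nonneg (f := fun ω => max (g i ω) 0) (μ := μ) fun ω => le_max_right _ _
        gcongr

theorem integral_orderStat_le (hmeas : ∀ i, Measurable (g i)) (hindep : iIndepFun g μ)
    (hcdf : ∀ i x, (μ {ω | g i ω ≤ x}).toReal = F x) (hpos : ∀ i, ∀ᵐ ω ∂μ, 0 ≤ g i ω)
    (hint : ∀ i, Integrable (fun ω => max (g i ω) 0) μ) {C : ℝ}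
    (hC : ∀ i, ∫ ω, max (g i ω) 0 ∂μ = C) {N K : ℕ} (hK1 : 1 ≤ K) (hKN : K ≤ N) {x : ℝ}
    (hx : 0 ≤ x) :
    ∫ ω, orderStat g N K ω ∂μ ≤ x + N * N.choose K * (1 - F x) ^ (N - K) * C := by
  set A := {ω | countLE g N ω x < K}
  have hA : MeasurableSet A := measurable_countLE hmeas N x measurableSet_Iio
  have hX := integrable_orderStat hmeas hpos hint hK1 hKN
  have hAc : ∫ ω in Aᶜ, orderStat g N K ω ∂μ ≤ x := by
    calc ∫ ω in Aᶜ, orderStat g N K ω ∂μ ≤ ∫ _ in Aᶜ, x ∂μ :=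
          setIntegral_mono_on hX.integrableOn (integrableOn_const (measure_ne_top _ _)) hA.compl
            fun ω hω => (orderStat_le_iff hK1 hKN).2 (not_lt.1 hω)
      _ ≤ x := by
          rw [setIntegral_const, smul_eq_mul]
          exact mul_le_of_le_one_left hx measureReal_le_one
  have hA' : ∫ ω in A, orderStat g N K ω ∂μ ≤ N * N.choose K * (1 - F x) ^ (N - K) * C := by
    calc ∫ ω in A, orderStat g N K ω ∂μ
        ≤ ∫ ω in A, ∑ i ∈ Finset.Icc 1 N, max (g i ω) 0 ∂μ :=
          setIntegral_mono hX.integrableOn (integrable_finsetSum _ fun i _ => hint i).integrableOn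
            fun ω => orderStat_le_sum_posPart hK1 hKN
      _ = ∑ i ∈ Finset.Icc 1 N, ∫ ω in A, max (g i ω) 0 ∂μ :=
          integral_finsetSum _ fun i _ => (hint i).integrableOn
      _ ≤ ∑ _i ∈ Finset.Icc 1 N, N.choose K * (1 - F x) ^ (N - K) * C :=
          Finset.sum_le_sum fun i _ => hC i ▸
            setIntegral_countLE_lt_posPart_le hmeas hindep hcdf hint hKN x i
      _ = N * N.choose K * (1 - F x) ^ (N - K) * C := by simp [mul_assoc]
  rw [← integral_add_compl hA hX]
  linarith

end Estimate

theorem expectation_orderStat_tendsto_zero_general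
    {Ω : Type*} [MeasurableSpace Ω] (μ : Measure Ω) [IsProbabilityMeasure μ]
    (g : ℕ → Ω → ℝ) (hmeas : ∀ i, Measurable (g i))
    (hindep : iIndepFun g μ)
    (F : ℝ → ℝ) (hcdf : ∀ i x, (μ {ω | g i ω ≤ x}).toReal = F x)
    (hFmono : StrictMonoOn F (Set.Ioi 0))
    (hsupp : ∀ x ≤ (0 : ℝ), F x = 0)
    (α β n l : ℝ) (hβ : 0 < β) (hn : 0 < n)
    (H : ℝ → ℝ)
    (hHo : H =o[atTop] fun x => x ^ n)
    (htail : Tendsto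
      (fun x => (1 - F x) / (α * x ^ l * Real.exp (-β * x ^ n + H x)))
      atTop (𝓝 1))
    (K : ℕ → ℕ) (hK : ∀ N, 1 ≤ K N ∧ K N ≤ N)
    (hKo : Tendsto (fun N : ℕ => (K N : ℝ) / N) atTop (𝓝 0)) :
    Tendsto (fun N : ℕ => ∫ ω, orderStat g N (K N) ω ∂μ) atTop (𝓝 0) := by
  have hpos : ∀ i, ∀ᵐ ω ∂μ, 0 ≤ g i ω := fun i =>
    (ae_pos_of_cdf_zero hcdf (hsupp 0 le_rfl) i).mono fun _ h => h.le
  have hfin := setLIntegral_Ioi_ofReal_ne_top (fun t => by linarith [cdf_nonneg hcdf t])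
    (eventually_le_rpow_neg_two_of_tendsto_div_stretchedExp hβ hn hHo htail)
  have hint := integrable_posPart hmeas hcdf hfin
  refine tendsto_order.2 ⟨fun a ha => .of_forall fun N => ha.trans_le ?_, fun b hb => ?_⟩
  · refine integral_nonneg_of_ae ?_
    filter_upwards [ae_all_iff.2 hpos] with ω hω
    exact orderStat_nonneg (hK N).1 fun i _ => hω i
  have hε : 0 < b / 2 := half_pos hb
  have hFε : 0 < F (b / 2) := (cdf_nonneg hcdf (b / 4)).trans_lt
    (hFmono (mem_Ioi.2 (by linarith)) hε (by linarith))
  have hdecay := (tendsto_natCast_mul_choose_mul_pow_sub (sub_nonneg.2 (cdf_le_one hcdf _))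
    (by linarith) (fun N => (hK N).2) hKo).mul_const
    (∫⁻ t in Ioi 0, ENNReal.ofReal (1 - F t)).toReal
  rw [zero_mul] at hdecay
  filter_upwards [hdecay.eventually_lt_const hε] with N hN
  calc ∫ ω, orderStat g N (K N) ω ∂μ ≤ b / 2 + _ :=
        integral_orderStat_le hmeas hindep hcdf hpos hint (integral_posPart_eq hmeas hcdf)
          (hK N).1 (hK N).2 hε.le
    _ < b := by linarith

/-- For i.i.d. `g i` with class-𝒞 CDF `F` (continuous, strictly increasing with positive
support, double-exponential tail, regularly varying at 0) and `K_N = o(N)`,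
`E[g_{K_N:N}] → 0`. -/
theorem expectation_orderStat_tendsto_zero
    {Ω : Type*} [MeasurableSpace Ω] (μ : Measure Ω) [IsProbabilityMeasure μ]
    (g : ℕ → Ω → ℝ) (hmeas : ∀ i, Measurable (g i))
    (hindep : iIndepFun g μ)
    (F : ℝ → ℝ) (hcdf : ∀ i x, (μ {ω | g i ω ≤ x}).toReal = F x)
    (hFcont : Continuous F) (hFmono : StrictMonoOn F (Set.Ioi 0))
    (hsupp : ∀ x ≤ (0 : ℝ), F x = 0)
    (α β n l : ℝ) (hα : 0 < α) (hβ : 0 < β) (hn : 0 < n)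
    (H : ℝ → ℝ)
    (hslow : ∀ a > (0 : ℝ), Tendsto (fun x => H (a * x) / H x) atTop (𝓝 1))
    (hHo : H =o[atTop] fun x => x ^ n)
    (htail : Tendsto
      (fun x => (1 - F x) / (α * x ^ l * Real.exp (-β * x ^ n + H x)))
      atTop (𝓝 1))
    (η γ : ℝ) (hη : 0 < η) (hγ : 0 < γ)
    (horigin : Tendsto (fun x => F x / (η * x ^ γ)) (𝓝[>] 0) (𝓝 1))
    (K : ℕ → ℕ) (hK : ∀ N, 1 ≤ K N ∧ K N ≤ N)
    (hKo : Tendsto (fun N : ℕ => (K N : ℝ) / N) atTop (𝓝 0)) :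
    Tendsto (fun N : ℕ => ∫ ω, orderStat g N (K N) ω ∂μ) atTop (𝓝 0) :=
  expectation_orderStat_tendsto_zero_general μ g hmeas hindep F hcdf hFmono hsupp α β n l hβ hn H
    hHo htail K hK hKo
end

section
/- Let $X_1,\dots,X_N$ be i.i.d. nonnegative random variables with Pareto-type tail $\lim_{x\to\infty}(1-F_X(x))/(\xi x^{-\gamma})=1$, $\xi,\gamma>0$, let $X^\star_N=\max_i X_i$ and $\tilde{X}_N=\frac{\log X^\star_N}{\frac{1}{\gamma}\log(\xi N)}\mathbf{1}\{X^\star_N\ge 1\}$. Then for all $\epsilon_1,\epsilon_2>0$ there exist constants $N_0, C_0$ such that for all $C\ge C_0$, $\sup_{N\ge N_0}\mathbb{E}[\tilde{X}_N\mathbf{1}\{\tilde{X}_N>C\}]\le C(1+\epsilon_1)(1+\epsilon_2)\frac{\xi N_0}{(\xi N_0)^{C}}\sum_{i=0}^{\infty}\frac{i+2}{(\xi N_0)^{iC}}$; in particular the family $\{\tilde{X}_N\}_{N\ge 1}$ is uniformly integrable. -/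
open MeasureTheory ProbabilityTheory Filter Real Set Topology

/-- The normalized truncated log-maximum
`X̃_N = (log X*_N / ((1/γ) log(ξ N))) 1{X*_N ≥ 1}`. -/
noncomputable def normLogMax {Ω : Type*} (X : ℕ → Ω → ℝ) (ξ γ : ℝ) (N : ℕ) (ω : Ω) : ℝ :=
  if 1 ≤ maxOver X N ω then
    Real.log (maxOver X N ω) / ((1 / γ) * Real.log (ξ * N)) else 0

lemma exists_nat_layer {C z : ℝ} (hC : 0 < C) (hz : C < z) :
    ∃ i : ℕ, ((i : ℝ) + 1) * C < z ∧ z ≤ ((i : ℝ) + 2) * C := by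
  set n := ⌈z / C⌉₊
  have hn : 1 < n := Nat.lt_ceil.2 (by rw [Nat.cast_one, one_lt_div hC]; exact hz)
  have hn_le : z / C ≤ n := Nat.le_ceil _
  have hn_lt : (n : ℝ) < z / C + 1 := Nat.ceil_lt_add_one (div_pos (hC.trans hz) hC).le
  refine ⟨n - 2, ?_, ?_⟩
  · push_cast [Nat.cast_sub hn]
    have := (lt_div_iff₀ hC).1 (show (n : ℝ) - 1 < z / C by linarith)
    linarith
  · push_cast [Nat.cast_sub hn]; rw [sub_add_cancel]
    exact (div_le_iff₀ hC).1 hn_le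

lemma integral_ite_lt_le_tsum {Ω : Type*} [MeasurableSpace Ω] (μ : Measure Ω) {Z : Ω → ℝ}
    (hZ : Measurable Z) {C : ℝ} (hC : 0 < C) {p : ℕ → ℝ} (hp : ∀ i, 0 ≤ p i)
    (hμ : ∀ i : ℕ, μ {ω | ((i : ℝ) + 1) * C < Z ω} ≤ ENNReal.ofReal (p i))
    (hsum : Summable fun i : ℕ => ((i : ℝ) + 2) * C * p i) :
    ∫ ω, (if C < Z ω then Z ω else 0) ∂μ ≤ ∑' i : ℕ, ((i : ℝ) + 2) * C * p i := by
  set S : ℕ → Set Ω := fun i => {ω | ((i : ℝ) + 1) * C < Z ω}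
  have hS : ∀ i, MeasurableSet (S i) := fun i => measurableSet_lt measurable_const hZ
  have hnn : ∀ ω, 0 ≤ if C < Z ω then Z ω else 0 := fun ω => by
    split_ifs with h
    exacts [hC.le.trans h.le, le_rfl]
  have hlayer : ∀ ω, ENNReal.ofReal (if C < Z ω then Z ω else 0) ≤
      ∑' i, (S i).indicator (fun _ => ENNReal.ofReal (((i : ℝ) + 2) * C)) ω := fun ω => by
    split_ifs with h
    · obtain ⟨i, hlt, hle⟩ := exists_nat_layer hC h
      refine le_trans ?_ (ENNReal.le_tsum i)
      rw [Set.indicator_of_mem (show ω ∈ S i from hlt)]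
      exact ENNReal.ofReal_le_ofReal hle
    · simp
  have hterm : ∀ i : ℕ, 0 ≤ ((i : ℝ) + 2) * C * p i := fun i => by
    have := hp i; positivity
  have hmeas : Measurable fun ω => if C < Z ω then Z ω else 0 :=
    Measurable.ite (measurableSet_lt measurable_const hZ) hZ measurable_const
  rw [integral_eq_lintegral_of_nonneg_ae (ae_of_all _ hnn) hmeas.aestronglyMeasurable]
  refine ENNReal.toReal_le_of_le_ofReal (tsum_nonneg hterm) ?_
  calc ∫⁻ ω, ENNReal.ofReal (if C < Z ω then Z ω else 0) ∂μ
      ≤ ∫⁻ ω, ∑' i, (S i).indicator (fun _ => ENNReal.ofReal (((i : ℝ) + 2) * C)) ω ∂μ :=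
        lintegral_mono hlayer
    _ = ∑' i : ℕ, ENNReal.ofReal (((i : ℝ) + 2) * C) * μ (S i) := by
        rw [lintegral_tsum fun i => (measurable_const.indicator (hS i)).aemeasurable]
        simp only [lintegral_indicator_const (hS _)]
    _ ≤ ∑' i : ℕ, ENNReal.ofReal (((i : ℝ) + 2) * C) * ENNReal.ofReal (p i) :=
        ENNReal.tsum_le_tsum fun i => mul_le_mul_right (hμ i) _
    _ = ENNReal.ofReal (∑' i : ℕ, ((i : ℝ) + 2) * C * p i) := by
        rw [ENNReal.ofReal_tsum_of_nonneg hterm hsum]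
        exact tsum_congr fun i => (ENNReal.ofReal_mul (by positivity)).symm

lemma exists_nat_one_lt_mul {ξ : ℝ} (hξ : 0 < ξ) : ∃ N : ℕ, 1 < ξ * N :=
  (exists_nat_gt ξ⁻¹).imp fun _ h => (inv_lt_iff_one_lt_mul₀' hξ).1 h

lemma eventually_le_rpow_div_atTop {b γ : ℝ} (hb : 1 < b) (hγ : 0 < γ) (x₀ : ℝ) :
    ∀ᶠ C in atTop, x₀ ≤ b ^ (C / γ) :=
  ((tendsto_rpow_atTop_of_base_gt_one b hb).comp
    (tendsto_id.atTop_div_const hγ)).eventually_ge_atTop x₀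

lemma eventually_le_mul_of_tendsto_div_nhds_one {α : Type*} {l : Filter α} {f g : α → ℝ}
    (h : Tendsto (fun x => f x / g x) l (𝓝 1)) (hg : ∀ᶠ x in l, 0 < g x) {K : ℝ} (hK : 1 < K) :
    ∀ᶠ x in l, f x ≤ K * g x := by
  filter_upwards [h.eventually (eventually_le_nhds hK), hg] with x hx hgx
  exact (div_le_iff₀ hgx).1 hx

lemma measure_lt_eq_ofReal_one_sub_s12 {Ω : Type*} [MeasurableSpace Ω] (μ : Measure Ω)
    [IsProbabilityMeasure μ] {Y : Ω → ℝ} (hY : Measurable Y) {F : ℝ → ℝ}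
    (hF : ∀ x, (μ {ω | Y ω ≤ x}).toReal = F x) (t : ℝ) :
    μ {ω | t < Y ω} = ENNReal.ofReal (1 - F t) := by
  have hcompl : {ω | t < Y ω} = {ω | Y ω ≤ t}ᶜ := by ext ω; simp
  rw [hcompl, prob_compl_eq_one_sub (measurableSet_le hY measurable_const), ← hF t,
    ENNReal.ofReal_sub _ ENNReal.toReal_nonneg, ENNReal.ofReal_one,
    ENNReal.ofReal_toReal (measure_ne_top μ _)]

section Maximum

variable {Ω : Type*} {X : ℕ → Ω → ℝ}

lemma measurable_maxOver_s12 [MeasurableSpace Ω] (hX : ∀ i, Measurable (X i)) (N : ℕ) :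
    Measurable (maxOver X N) :=
  Measurable.sSup (Set.to_countable _) fun i _ => hX i

lemma measurable_normLogMax [MeasurableSpace Ω] (hX : ∀ i, Measurable (X i)) (ξ γ : ℝ) (N : ℕ) :
    Measurable (normLogMax X ξ γ N) :=
  have hM := measurable_maxOver_s12 hX N
  Measurable.ite (measurableSet_le measurable_const hM)
    ((Real.measurable_log.comp hM).div_const _) measurable_const

lemma setOf_lt_maxOver_subset (N : ℕ) {t : ℝ} (ht : 0 ≤ t) :
    {ω | t < maxOver X N ω} ⊆ ⋃ i ∈ Finset.Icc 1 N, {ω | t < X i ω} := by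
  intro ω hω
  rcases ((fun i => X i ω) '' Set.Icc 1 N).eq_empty_or_nonempty with hempty | hne
  · rw [Set.mem_ofPred_eq, maxOver, hempty, Real.sSup_empty] at hω
    exact absurd hω ht.not_gt
  · obtain ⟨_, ⟨i, hi, rfl⟩, hlt⟩ := exists_lt_of_lt_csSup hne hω
    exact Set.mem_biUnion (Finset.mem_Icc.2 hi) hlt

lemma measure_lt_maxOver_le [MeasurableSpace Ω] (μ : Measure Ω) [IsProbabilityMeasure μ]
    (hX : ∀ i, Measurable (X i)) {F : ℝ → ℝ} (hF : ∀ i x, (μ {ω | X i ω ≤ x}).toReal = F x)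
    (N : ℕ) {t : ℝ} (ht : 0 ≤ t) :
    μ {ω | t < maxOver X N ω} ≤ N * ENNReal.ofReal (1 - F t) :=
  calc μ {ω | t < maxOver X N ω}
      ≤ ∑ i ∈ Finset.Icc 1 N, μ {ω | t < X i ω} :=
        (measure_mono (setOf_lt_maxOver_subset N ht)).trans (measure_biUnion_finset_le _ _)
    _ = N * ENNReal.ofReal (1 - F t) := by
        simp only [measure_lt_eq_ofReal_one_sub_s12 μ (hX _) (hF _), Finset.sum_const,
          Nat.card_Icc, add_tsub_cancel_right, nsmul_eq_mul]

lemma lt_normLogMax_iff {ξ γ s : ℝ} {N : ℕ} (hγ : 0 < γ) (hb : 1 < ξ * N) (hs : 0 < s)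
    (ω : Ω) : s < normLogMax X ξ γ N ω ↔ (ξ * N) ^ (s / γ) < maxOver X N ω := by
  have hb0 : 0 < ξ * N := one_pos.trans hb
  have hd : 0 < 1 / γ * Real.log (ξ * N) := by have := Real.log_pos hb; positivity
  have hpow : (ξ * N) ^ (s / γ) = Real.exp (s * (1 / γ * Real.log (ξ * N))) := by
    rw [Real.rpow_def_of_pos hb0]; ring_nf
  rw [hpow, normLogMax]
  constructor
  · intro h
    split_ifs at h with h1
    · rw [lt_div_iff₀ hd] at h
      exact (Real.lt_log_iff_exp_lt (one_pos.trans_le h1)).1 h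
    · exact absurd h hs.not_gt
  · intro h
    have h1 : 1 ≤ maxOver X N ω := (Real.one_le_exp (by positivity)).trans h.le
    rw [if_pos h1, lt_div_iff₀ hd]
    exact (Real.lt_log_iff_exp_lt (one_pos.trans_le h1)).2 h

lemma normLogMax_nonpos {ξ γ : ℝ} {N : ℕ} (hξ : 0 ≤ ξ) (hγ : 0 ≤ γ) (hb : ξ * N ≤ 1) (ω : Ω) :
    normLogMax X ξ γ N ω ≤ 0 := by
  unfold normLogMax
  split_ifs with h
  · exact div_nonpos_of_nonneg_of_nonpos (Real.log_nonneg h)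
      (mul_nonpos_of_nonneg_of_nonpos (by positivity) (Real.log_nonpos (by positivity) hb))
  · exact le_rfl

lemma measure_lt_normLogMax_le [MeasurableSpace Ω] (μ : Measure Ω) [IsProbabilityMeasure μ]
    (hX : ∀ i, Measurable (X i)) {F : ℝ → ℝ}
    (hF : ∀ i x, (μ {ω | X i ω ≤ x}).toReal = F x) {ξ γ K x₀ : ℝ} (hγ : 0 < γ)
    (htail : ∀ x ≥ x₀, 1 - F x ≤ K * (ξ * x ^ (-γ))) {N : ℕ} (hb : 1 < ξ * N) {s : ℝ}
    (hs : 0 < s) (hx₀ : x₀ ≤ (ξ * N) ^ (s / γ)) :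
    μ {ω | s < normLogMax X ξ γ N ω} ≤ ENNReal.ofReal (K * (ξ * N) ^ (1 - s)) := by
  have hb0 : 0 < ξ * N := one_pos.trans hb
  set t := (ξ * N) ^ (s / γ)
  have hpareto : (N : ℝ) * (K * (ξ * t ^ (-γ))) = K * (ξ * N) ^ (1 - s) := by
    rw [← Real.rpow_mul hb0.le, show s / γ * -γ = -s by field_simp, Real.rpow_sub hb0,
      Real.rpow_one, Real.rpow_neg hb0.le, div_eq_mul_inv]
    ring
  calc μ {ω | s < normLogMax X ξ γ N ω} = μ {ω | t < maxOver X N ω} := by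
        congr 1; ext ω; exact lt_normLogMax_iff hγ hb hs ω
    _ ≤ N * ENNReal.ofReal (1 - F t) := measure_lt_maxOver_le μ hX hF N (by positivity)
    _ ≤ N * ENNReal.ofReal (K * (ξ * t ^ (-γ))) := by gcongr; exact htail t hx₀
    _ = ENNReal.ofReal (K * (ξ * N) ^ (1 - s)) := by
        rw [← hpareto, ENNReal.ofReal_mul (Nat.cast_nonneg N), ENNReal.ofReal_natCast]

end Maximum

/-- The paper's bound on `𝔼[X̃_N 1{X̃_N > C}]` for `N ≥ N₀`, with `b = ξ N₀` and without the
factor `(1 + ε₁) (1 + ε₂)`. -/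
noncomputable def truncMeanBound (b C : ℝ) : ℝ :=
  C * b / b ^ C * ∑' i : ℕ, ((i : ℝ) + 2) / b ^ ((i : ℝ) * C)

section TruncMeanBound

variable {b C : ℝ}

lemma summable_add_two_div_rpow (hb : 1 < b) (hC : 0 < C) :
    Summable fun i : ℕ => ((i : ℝ) + 2) / b ^ ((i : ℝ) * C) := by
  set r := (b ^ C)⁻¹
  have hr0 : 0 ≤ r := by positivity
  have hr1 : r < 1 := inv_lt_one_of_one_lt₀ (Real.one_lt_rpow hb hC)
  have hgeom := (summable_pow_mul_geometric_of_norm_lt_one 1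
    (by rwa [Real.norm_of_nonneg hr0])).add ((summable_geometric_of_lt_one hr0 hr1).mul_left 2)
  refine hgeom.congr fun i => ?_
  rw [mul_comm (i : ℝ), Real.rpow_mul_natCast (by positivity), div_eq_mul_inv, ← inv_pow]
  ring

lemma truncMeanBound_nonneg (hb : 0 < b) (hC : 0 ≤ C) : 0 ≤ truncMeanBound b C := by
  unfold truncMeanBound
  positivity

lemma tendsto_truncMeanBound (hb : 1 < b) : Tendsto (truncMeanBound b) atTop (𝓝 0) := by
  have hb0 : 0 < b := one_pos.trans hb
  set T := ∑' i : ℕ, ((i : ℝ) + 2) / b ^ ((i : ℝ) * 1)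
  have hdecay : Tendsto (fun C : ℝ => C * b / b ^ C * T) atTop (𝓝 0) := by
    have h := (tendsto_rpow_mul_exp_neg_mul_atTop_nhds_zero 1 _ (Real.log_pos hb)).mul_const (b * T)
    rw [zero_mul] at h
    refine h.congr fun C => ?_
    rw [Real.rpow_one, Real.rpow_def_of_pos hb0, neg_mul, Real.exp_neg, mul_comm (Real.log b)]
    ring
  refine tendsto_of_tendsto_of_tendsto_of_le_of_le' tendsto_const_nhds hdecay ?_ ?_
  · filter_upwards [eventually_ge_atTop 0] with C hC using truncMeanBound_nonneg hb0 hC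
  · filter_upwards [eventually_ge_atTop 1] with C hC
    refine mul_le_mul_of_nonneg_left (Summable.tsum_le_tsum (fun i => ?_)
      (summable_add_two_div_rpow hb (by linarith)) (summable_add_two_div_rpow hb one_pos))
      (by positivity)
    gcongr
    exact hb.le

end TruncMeanBound

section Truncation

variable {Ω : Type*} [MeasurableSpace Ω] (μ : Measure Ω) [IsProbabilityMeasure μ]
  {X : ℕ → Ω → ℝ} (hX : ∀ i, Measurable (X i)) {F : ℝ → ℝ}
  (hF : ∀ i x, (μ {ω | X i ω ≤ x}).toReal = F x) {ξ γ K x₀ : ℝ} (hγ : 0 < γ)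
  (htail : ∀ x ≥ x₀, 1 - F x ≤ K * (ξ * x ^ (-γ)))
include hX hF hγ htail

lemma integral_ite_lt_normLogMax_le (hK : 0 ≤ K) {N : ℕ} {b₀ : ℝ} (hb₀ : 1 < b₀)
    (hb : b₀ ≤ ξ * N) {C : ℝ} (hC : 1 ≤ C) (hx₀ : x₀ ≤ b₀ ^ (C / γ)) :
    ∫ ω, (if C < normLogMax X ξ γ N ω then normLogMax X ξ γ N ω else 0) ∂μ ≤
      K * truncMeanBound b₀ C := by
  have hb₀0 : 0 < b₀ := one_pos.trans hb₀
  have hC0 : 0 < C := one_pos.trans_le hC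
  set p : ℕ → ℝ := fun i => K * b₀ / b₀ ^ C / b₀ ^ ((i : ℝ) * C)
  have hp : ∀ i : ℕ, ((i : ℝ) + 2) * C * p i =
      K * (C * b₀ / b₀ ^ C) * (((i : ℝ) + 2) / b₀ ^ ((i : ℝ) * C)) := fun i => by ring
  have hμ : ∀ i : ℕ, μ {ω | ((i : ℝ) + 1) * C < normLogMax X ξ γ N ω} ≤ ENNReal.ofReal (p i) := by
    intro i
    have hi : (1 : ℝ) ≤ i + 1 := le_add_of_nonneg_left i.cast_nonneg
    have hs : 1 ≤ ((i : ℝ) + 1) * C := one_le_mul_of_one_le_of_one_le hi hC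
    have hthreshold : x₀ ≤ (ξ * N) ^ (((i : ℝ) + 1) * C / γ) :=
      calc x₀ ≤ b₀ ^ (C / γ) := hx₀
        _ ≤ (ξ * N) ^ (C / γ) := by gcongr
        _ ≤ (ξ * N) ^ (((i : ℝ) + 1) * C / γ) :=
          Real.rpow_le_rpow_of_exponent_le (hb₀.le.trans hb)
            (by gcongr; exact le_mul_of_one_le_left hC0.le hi)
    refine (measure_lt_normLogMax_le μ hX hF hγ htail (hb₀.trans_le hb) (one_pos.trans_le hs)
      hthreshold).trans (ENNReal.ofReal_le_ofReal ?_)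
    calc K * (ξ * N) ^ (1 - ((i : ℝ) + 1) * C) ≤ K * b₀ ^ (1 - ((i : ℝ) + 1) * C) :=
          mul_le_mul_of_nonneg_left (Real.rpow_le_rpow_of_nonpos hb₀0 hb (by linarith)) hK
      _ = p i := by
          rw [Real.rpow_sub hb₀0, Real.rpow_one, add_one_mul, add_comm, Real.rpow_add hb₀0]
          ring
  calc _ ≤ ∑' i : ℕ, ((i : ℝ) + 2) * C * p i :=
        integral_ite_lt_le_tsum μ (measurable_normLogMax hX ξ γ N) hC0
          (fun i => by positivity) hμ
          (((summable_add_two_div_rpow hb₀ hC0).mul_left _).congr fun i => (hp i).symm)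
    _ = K * truncMeanBound b₀ C := by
        rw [tsum_congr hp, tsum_mul_left, truncMeanBound]
        ring

lemma tendsto_iSup_integral_ite_lt_normLogMax (hξ : 0 < ξ) (hK : 0 ≤ K) :
    Tendsto (fun C : ℝ => ⨆ N : ℕ,
      ∫ ω, (if C < normLogMax X ξ γ N ω then normLogMax X ξ γ N ω else 0) ∂μ) atTop (𝓝 0) := by
  obtain ⟨N₀, hN₀⟩ := exists_nat_one_lt_mul hξ
  -- For `N ≥ N₀` the bound at base `ξ N₀` applies; each of the finitely many `N < N₀` with
  -- `ξ N > 1` needs its own base `ξ N`, and for `ξ N ≤ 1` the variable is nonpositive.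
  set S := (Finset.range (N₀ + 1)).filter fun N : ℕ => 1 < ξ * N
  have hS : ∀ N ∈ S, 1 < ξ * N := fun N hN => (Finset.mem_filter.1 hN).2
  have hbound : Tendsto (fun C => ∑ N ∈ S, K * truncMeanBound (ξ * N) C) atTop (𝓝 0) := by
    simpa using tendsto_finsetSum S fun N hN => (tendsto_truncMeanBound (hS N hN)).const_mul K
  have hlarge : ∀ᶠ C in atTop, 1 ≤ C ∧ ∀ N ∈ S, x₀ ≤ (ξ * N) ^ (C / γ) :=
    (eventually_ge_atTop 1).and
      ((eventually_all_finset S).2 fun N hN => eventually_le_rpow_div_atTop (hS N hN) hγ x₀)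
  refine tendsto_of_tendsto_of_tendsto_of_le_of_le' tendsto_const_nhds hbound ?_ ?_
  · filter_upwards [eventually_ge_atTop 0] with C hC
    refine Real.iSup_nonneg fun N => integral_nonneg fun ω => ?_
    dsimp only
    split_ifs with h
    exacts [hC.trans h.le, le_rfl]
  · filter_upwards [hlarge] with C ⟨hC, hCS⟩
    have hterm : ∀ N ∈ S, 0 ≤ K * truncMeanBound (ξ * N) C := fun N hN =>
      mul_nonneg hK (truncMeanBound_nonneg (one_pos.trans (hS N hN)) (by linarith))
    refine ciSup_le fun N => ?_
    by_cases hN : 1 < ξ * N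
    · have hmin : min N N₀ ∈ S := Finset.mem_filter.2 ⟨Finset.mem_range.2 (by omega), by
        rcases min_choice N N₀ with h | h <;> rw [h] <;> assumption⟩
      have hle : ξ * (min N N₀ : ℕ) ≤ ξ * N := by gcongr; exact min_le_left _ _
      exact (integral_ite_lt_normLogMax_le μ hX hF hγ htail hK (hS _ hmin) hle hC
        (hCS _ hmin)).trans (Finset.single_le_sum hterm hmin)
    · have hzero : ∀ ω, ¬ C < normLogMax X ξ γ N ω := fun ω =>
        not_lt.2 ((normLogMax_nonpos hξ.le hγ.le (not_lt.1 hN) ω).trans (by linarith))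
      simp only [hzero, if_false, integral_zero]
      exact Finset.sum_nonneg hterm

end Truncation

theorem normLogMax_uniformly_integrable_general
    {Ω : Type*} [MeasurableSpace Ω] (μ : Measure Ω) [IsProbabilityMeasure μ]
    (X : ℕ → Ω → ℝ) (hmeas : ∀ i, Measurable (X i))
    (F : ℝ → ℝ) (hcdf : ∀ i x, (μ {ω | X i ω ≤ x}).toReal = F x)
    (ξ γ : ℝ) (hξ : 0 < ξ) (hγ : 0 < γ)
    (htail : Tendsto (fun x => (1 - F x) / (ξ * x ^ (-γ))) atTop (𝓝 1)) :
    (∀ ε₁ > (0 : ℝ), ∀ ε₂ > (0 : ℝ), ∃ N₀ : ℕ, ∃ C₀ : ℝ, ∀ C ≥ C₀, ∀ N ≥ N₀,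
      (∫ ω, (if C < normLogMax X ξ γ N ω then normLogMax X ξ γ N ω else 0) ∂μ) ≤
        C * (1 + ε₁) * (1 + ε₂) * (ξ * N₀) / (ξ * N₀) ^ C *
          ∑' i : ℕ, ((i : ℝ) + 2) / (ξ * N₀) ^ ((i : ℝ) * C)) ∧
    Tendsto (fun C : ℝ =>
      ⨆ N : ℕ, ∫ ω, (if C < normLogMax X ξ γ N ω then normLogMax X ξ γ N ω else 0) ∂μ)
      atTop (𝓝 0) := by
  have hpareto : ∀ K > 1, ∃ x₀, ∀ x ≥ x₀, 1 - F x ≤ K * (ξ * x ^ (-γ)) := fun K hK =>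
    eventually_atTop.1 (eventually_le_mul_of_tendsto_div_nhds_one htail
      ((eventually_gt_atTop 0).mono fun x hx => by positivity) hK)
  obtain ⟨x₁, htail₁⟩ := hpareto 2 one_lt_two
  refine ⟨fun ε₁ hε₁ ε₂ hε₂ => ?_,
    tendsto_iSup_integral_ite_lt_normLogMax μ hmeas hcdf hγ htail₁ hξ zero_le_two⟩
  obtain ⟨x₀, htail₀⟩ := hpareto (1 + ε₁) (by linarith)
  obtain ⟨N₀, hb₀⟩ := exists_nat_one_lt_mul hξ
  obtain ⟨C₀, hC₀⟩ := eventually_atTop.1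
    ((eventually_ge_atTop 1).and (eventually_le_rpow_div_atTop hb₀ hγ x₀))
  refine ⟨N₀, C₀, fun C hC N hN => ?_⟩
  obtain ⟨hC1, hx₀⟩ := hC₀ C hC
  calc _ ≤ (1 + ε₁) * truncMeanBound (ξ * N₀) C :=
        integral_ite_lt_normLogMax_le μ hmeas hcdf hγ htail₀ (by linarith) hb₀ (by gcongr) hC1 hx₀
    _ ≤ (1 + ε₂) * ((1 + ε₁) * truncMeanBound (ξ * N₀) C) :=
        le_mul_of_one_le_left (mul_nonneg (by linarith)
          (truncMeanBound_nonneg (one_pos.trans hb₀) (by linarith))) (by linarith)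
    _ = _ := by rw [truncMeanBound]; ring

/-- Uniform integrability of the normalized truncated log-maximum for i.i.d.
Pareto-type tailed random variables, with an explicit truncation bound. -/
theorem normLogMax_uniformly_integrable
    {Ω : Type*} [MeasurableSpace Ω] (μ : Measure Ω) [IsProbabilityMeasure μ]
    (X : ℕ → Ω → ℝ) (hmeas : ∀ i, Measurable (X i)) (hnn : ∀ i ω, 0 ≤ X i ω)
    (hindep : iIndepFun X μ)
    (F : ℝ → ℝ) (hcdf : ∀ i x, (μ {ω | X i ω ≤ x}).toReal = F x)
    (ξ γ : ℝ) (hξ : 0 < ξ) (hγ : 0 < γ)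
    (htail : Tendsto (fun x => (1 - F x) / (ξ * x ^ (-γ))) atTop (𝓝 1)) :
    (∀ ε₁ > (0 : ℝ), ∀ ε₂ > (0 : ℝ), ∃ N₀ : ℕ, ∃ C₀ : ℝ, ∀ C ≥ C₀, ∀ N ≥ N₀,
      (∫ ω, (if C < normLogMax X ξ γ N ω then normLogMax X ξ γ N ω else 0) ∂μ) ≤
        C * (1 + ε₁) * (1 + ε₂) * (ξ * N₀) / (ξ * N₀) ^ C *
          ∑' i : ℕ, ((i : ℝ) + 2) / (ξ * N₀) ^ ((i : ℝ) * C)) ∧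
    Tendsto (fun C : ℝ =>
      ⨆ N : ℕ, ∫ ω, (if C < normLogMax X ξ γ N ω then normLogMax X ξ γ N ω else 0) ∂μ)
      atTop (𝓝 0) :=
  normLogMax_uniformly_integrable_general μ X hmeas F hcdf ξ γ hξ hγ htail
end

section
/- Let $F_g$ be a CDF with $F_g(x)\sim \eta x^{\gamma}$ as $x\downarrow 0$ ($\eta,\gamma>0$). Then for every $\epsilon_2\in(0,1)$ and for $\epsilon_1>0$ small enough, $\int_0^{\epsilon_1}(1-F_g(x))^N dx \le \frac{1}{\gamma}\int_0^{\epsilon_1^{\gamma}} x^{\frac{1}{\gamma}-1}e^{-N(1-\epsilon_2)\eta x}dx$, and by Watson's lemma, $\limsup_{N\to\infty}\frac{\int_0^{\epsilon_1}(1-F_g(x))^N dx}{F_g^{-1}(1/N)}\le \Gamma\left(1+\frac1{\gamma}\right)$. -/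
open MeasureTheory Filter Real Set Topology intervalIntegral

/-!
Near the origin `(1 - δ) η x ^ γ ≤ F x ≤ (1 + δ) η x ^ γ`. The lower bound and
`1 - t ≤ exp (-t)` give `(1 - F x) ^ N ≤ exp (-N (1 - δ) η x ^ γ)`; the substitution `u = x ^ γ`
turns the integral of the latter into the Watson integral, which is at most its value
`(N (1 - δ) η) ^ (-1/γ) Γ(1 + 1/γ)` over `(0, ∞)`. Away from the origin `(1 - F x) ^ N` decays
geometrically. The upper bound gives `F⁻¹(1/N) ≥ (N (1 + δ) η) ^ (-1/γ)`, so the ratio is at most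
`((1 + δ) / (1 - δ)) ^ (1/γ) Γ(1 + 1/γ) + o(1)`, and `δ → 0` concludes.
-/

theorem integral_comp_rpow {γ a : ℝ} (hγ : 0 < γ) (ha : 0 ≤ a) (g : ℝ → ℝ) :
    ∫ x in 0..a, g (x ^ γ) = (1 / γ) * ∫ u in 0..a ^ γ, u ^ (1 / γ - 1) * g u := by
  -- Over `(0, ∞)` the change of variables holds with no integrability assumption.
  have hcomp : ∀ x ∈ Ioi (0 : ℝ), (Iic a).indicator (fun x => g (x ^ γ)) x =
      (γ * x ^ (γ - 1)) •
        (Iic (a ^ γ)).indicator (fun u => (1 / γ) * (u ^ (1 / γ - 1) * g u)) (x ^ γ) := by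
    intro x (hx : 0 < x)
    have hmem : x ^ γ ∈ Iic (a ^ γ) ↔ x ∈ Iic a := rpow_le_rpow_iff hx.le ha hγ
    by_cases hxa : x ∈ Iic a
    · have hexp : γ - 1 + γ * (1 / γ - 1) = 0 := by field_simp; ring
      have hpow : x ^ (γ - 1) * (x ^ γ) ^ (1 / γ - 1) = 1 := by
        rw [← rpow_mul hx.le, ← rpow_add hx, hexp, rpow_zero]
      rw [indicator_of_mem (hmem.mpr hxa), indicator_of_mem hxa, smul_eq_mul]
      calc g (x ^ γ) = γ * (1 / γ) * (x ^ (γ - 1) * (x ^ γ) ^ (1 / γ - 1)) * g (x ^ γ) := by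
            rw [mul_one_div_cancel hγ.ne', hpow, one_mul, one_mul]
        _ = _ := by ring
    · rw [indicator_of_notMem (mt hmem.mp hxa), indicator_of_notMem hxa, smul_zero]
  calc ∫ x in 0..a, g (x ^ γ)
      = ∫ x in Ioi 0, (Iic a).indicator (fun x => g (x ^ γ)) x := by
        rw [integral_of_le ha, setIntegral_indicator measurableSet_Iic, Ioi_inter_Iic]
    _ = ∫ u in Ioi 0,
          (Iic (a ^ γ)).indicator (fun u => (1 / γ) * (u ^ (1 / γ - 1) * g u)) u := by
        rw [setIntegral_congr_fun measurableSet_Ioi hcomp, integral_comp_rpow_Ioi_of_pos hγ]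
    _ = (1 / γ) * ∫ u in 0..a ^ γ, u ^ (1 / γ - 1) * g u := by
        rw [setIntegral_indicator measurableSet_Iic, Ioi_inter_Iic,
          MeasureTheory.integral_const_mul, integral_of_le (by positivity)]

theorem one_sub_pow_le_exp_neg_mul {t : ℝ} (ht : t ≤ 1) (N : ℕ) :
    (1 - t) ^ N ≤ exp (-(N * t)) := by
  calc (1 - t) ^ N ≤ exp (-t) ^ N := pow_le_pow_left₀ (by linarith) (one_sub_le_exp_neg t) N
    _ = exp (-(N * t)) := by rw [← exp_nat_mul, mul_neg]

theorem Monotone.antitone_one_sub_pow {F : ℝ → ℝ} (hFmono : Monotone F) (hFle1 : ∀ x, F x ≤ 1)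
    (N : ℕ) : Antitone fun x => (1 - F x) ^ N := fun x y hxy =>
  pow_le_pow_left₀ (by linarith [hFle1 y]) (by linarith [hFmono hxy]) N

theorem integral_one_sub_pow_le_integral_exp {F : ℝ → ℝ} (hFmono : Monotone F)
    (hFle1 : ∀ x, F x ≤ 1) {a c γ : ℝ} (ha : 0 ≤ a) (hγ : 0 ≤ γ)
    (hlow : ∀ x ∈ Ioc 0 a, c * x ^ γ ≤ F x) (N : ℕ) :
    ∫ x in 0..a, (1 - F x) ^ N ≤ ∫ x in 0..a, exp (-(N * c) * x ^ γ) := by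
  have hcont : Continuous fun x : ℝ => exp (-(N * c) * x ^ γ) := by
    fun_prop (disch := exact hγ)
  refine integral_mono_on_of_le_Ioo ha (hFmono.antitone_one_sub_pow hFle1 N).intervalIntegrable
    (hcont.intervalIntegrable _ _) fun x hx => (one_sub_pow_le_exp_neg_mul (hFle1 x) N).trans ?_
  rw [exp_le_exp, neg_mul, neg_le_neg_iff, mul_assoc]
  exact mul_le_mul_of_nonneg_left (hlow x (Ioo_subset_Ioc_self hx)) N.cast_nonneg

theorem integral_exp_neg_mul_rpow_le {γ b a : ℝ} (hγ : 0 < γ) (hb : 0 < b) (ha : 0 ≤ a) :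
    ∫ x in 0..a, exp (-b * x ^ γ) ≤ b ^ (-1 / γ) * Gamma (1 / γ + 1) := by
  have hint : IntegrableOn (fun x => exp (-b * x ^ γ)) (Ioi 0) := by
    simpa using integrableOn_rpow_mul_exp_neg_mul_rpow (s := 0) neg_one_lt_zero hγ hb
  rw [integral_of_le ha, ← integral_exp_neg_mul_rpow hγ hb]
  exact setIntegral_mono_set hint (.of_forall fun _ => (exp_pos _).le)
    Ioc_subset_Ioi_self.eventuallyLE

theorem exists_bounds_of_tendsto_div_rpow {F : ℝ → ℝ} {η γ : ℝ} (hη : 0 < η)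
    (horigin : Tendsto (fun x => F x / (η * x ^ γ)) (𝓝[>] 0) (𝓝 1)) {δ : ℝ} (hδ : 0 < δ) :
    ∃ a > 0, ∀ x ∈ Ioc 0 a, (1 - δ) * η * x ^ γ ≤ F x ∧ F x ≤ (1 + δ) * η * x ^ γ := by
  have hnear := horigin (Ioo_mem_nhds (by linarith : 1 - δ < 1) (by linarith : 1 < 1 + δ))
  obtain ⟨a, ha, hsub⟩ := mem_nhdsGT_iff_exists_Ioc_subset.mp hnear
  refine ⟨a, ha, fun x hx => ?_⟩
  have hpos : 0 < η * x ^ γ := mul_pos hη (rpow_pos_of_pos hx.1 γ)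
  obtain ⟨hlo, hhi⟩ := hsub hx
  rw [lt_div_iff₀ hpos] at hlo
  rw [div_lt_iff₀ hpos] at hhi
  constructor <;> linarith

theorem integral_one_sub_pow_le_gamma_add {F : ℝ → ℝ} (hFmono : Monotone F)
    (hFle1 : ∀ x, F x ≤ 1) {a ε c γ : ℝ} (hγ : 0 < γ) (hc : 0 < c) (ha : 0 ≤ a) (haε : a ≤ ε)
    (hlow : ∀ x ∈ Ioc 0 a, c * x ^ γ ≤ F x) {N : ℕ} (hN : N ≠ 0) :
    ∫ x in 0..ε, (1 - F x) ^ N ≤ (N * c) ^ (-1 / γ) * Gamma (1 / γ + 1) + ε * (1 - F a) ^ N := by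
  have hanti := hFmono.antitone_one_sub_pow hFle1 N
  rw [← integral_add_adjacent_intervals (b := a) hanti.intervalIntegrable
    hanti.intervalIntegrable]
  gcongr
  · exact (integral_one_sub_pow_le_integral_exp hFmono hFle1 ha hγ.le hlow N).trans
      (integral_exp_neg_mul_rpow_le hγ (by positivity) ha)
  · calc ∫ x in a..ε, (1 - F x) ^ N
        ≤ ∫ _ in a..ε, (1 - F a) ^ N :=
          integral_mono_on haε hanti.intervalIntegrable intervalIntegrable_const
            fun x hx => hanti hx.1
      _ ≤ ε * (1 - F a) ^ N := by
          rw [intervalIntegral.integral_const, smul_eq_mul]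
          exact mul_le_mul_of_nonneg_right (by linarith) (pow_nonneg (by linarith [hFle1 a]) N)

theorem rpow_le_of_apply_eq {F : ℝ → ℝ} (hFmono : Monotone F) {a C γ x y : ℝ} (hγ : 0 < γ)
    (hC : 0 < C) (hup : ∀ x ∈ Ioc 0 a, F x ≤ C * x ^ γ) (hx : 0 < x) (hy : 0 ≤ y)
    (hya : y < F a) (hFx : F x = y) : (y / C) ^ (1 / γ) ≤ x := by
  have hxa : x ≤ a := le_of_not_gt fun hax => (hFx ▸ hFmono hax.le).not_gt hya
  have hyx : y / C ≤ x ^ γ := (div_le_iff₀' hC).mpr (hFx ▸ hup x ⟨hx, hxa⟩)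
  calc (y / C) ^ (1 / γ) ≤ (x ^ γ) ^ (1 / γ) :=
        rpow_le_rpow (div_nonneg hy hC.le) hyx (by positivity)
    _ = x := by rw [← rpow_mul hx.le, mul_one_div_cancel hγ.ne', rpow_one]

theorem eventually_rpow_le_apply_inv_nat {F Finv : ℝ → ℝ} (hFmono : Monotone F)
    (hFinv : ∀ y ∈ Ioo (0 : ℝ) 1, 0 < Finv y ∧ F (Finv y) = y) {a C γ : ℝ} (hγ : 0 < γ)
    (hC : 0 < C) (hup : ∀ x ∈ Ioc 0 a, F x ≤ C * x ^ γ) (hFa : 0 < F a) :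
    ∀ᶠ N : ℕ in atTop, (N * C) ^ (-1 / γ) ≤ Finv (1 / N) := by
  filter_upwards [eventually_gt_atTop 1,
    tendsto_one_div_atTop_nhds_zero_nat.eventually_lt_const hFa] with N hN hNa
  have hN' : (1 : ℝ) < N := by exact_mod_cast hN
  obtain ⟨hpos, hFN⟩ := hFinv (1 / N) ⟨by positivity, (div_lt_one (by linarith)).mpr hN'⟩
  have hNC : 0 < (N : ℝ) * C := by positivity
  convert rpow_le_of_apply_eq hFmono hγ hC hup hpos (by positivity) hNa hFN using 1
  rw [div_div, one_div, inv_rpow hNC.le, neg_div, rpow_neg hNC.le]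

theorem tendsto_rpow_mul_pow_of_lt_one (s : ℝ) {q : ℝ} (hq0 : 0 ≤ q) (hq1 : q < 1) :
    Tendsto (fun n : ℕ => (n : ℝ) ^ s * q ^ n) atTop (𝓝 0) := by
  refine squeeze_zero' (.of_forall fun n => by positivity) ?_
    (tendsto_pow_const_mul_const_pow_of_lt_one ⌈s⌉₊ hq0 hq1)
  filter_upwards [eventually_ge_atTop 1] with n hn
  gcongr
  rw [← rpow_natCast]
  exact rpow_le_rpow_of_exponent_le (by exact_mod_cast hn) (Nat.le_ceil s)

theorem limsup_le_of_le_add_of_tendsto_zero {α : Type*} {l : Filter α} [l.NeBot] {u r : α → ℝ}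
    {c : ℝ} (hu : IsCoboundedUnder (· ≤ ·) l u) (hle : ∀ᶠ i in l, u i ≤ c + r i)
    (hr : Tendsto r l (𝓝 0)) : limsup u l ≤ c := by
  have hlim : Tendsto (fun i => c + r i) l (𝓝 c) := by simpa using tendsto_const_nhds.add hr
  exact (limsup_le_limsup hle hu hlim.isBoundedUnder_le).trans hlim.limsup_eq.le

theorem limsup_integral_one_sub_pow_div_le {F Finv : ℝ → ℝ} (hFmono : Monotone F)
    (hFle1 : ∀ x, F x ≤ 1) (hFinv : ∀ y ∈ Ioo (0 : ℝ) 1, 0 < Finv y ∧ F (Finv y) = y)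
    {a c C γ ε : ℝ} (hγ : 0 < γ) (hc : 0 < c) (hC : 0 < C) (ha : 0 < a) (hε : 0 < ε)
    (hbounds : ∀ x ∈ Ioc 0 a, c * x ^ γ ≤ F x ∧ F x ≤ C * x ^ γ) :
    limsup (fun N : ℕ => (∫ x in 0..ε, (1 - F x) ^ N) / Finv (1 / N)) atTop ≤
      (c / C) ^ (-1 / γ) * Gamma (1 / γ + 1) := by
  set b := min a ε
  have hb : 0 < b := lt_min ha hε
  have hbounds' : ∀ x ∈ Ioc 0 b, c * x ^ γ ≤ F x ∧ F x ≤ C * x ^ γ :=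
    fun x hx => hbounds x ⟨hx.1, hx.2.trans (min_le_left a ε)⟩
  have hFb : 0 < F b := (mul_pos hc (rpow_pos_of_pos hb γ)).trans_le (hbounds' b ⟨hb, le_rfl⟩).1
  have hinv :=
    eventually_rpow_le_apply_inv_nat hFmono hFinv hγ hC (fun x hx => (hbounds' x hx).2) hFb
  have hI : ∀ N : ℕ, 0 ≤ ∫ x in 0..ε, (1 - F x) ^ N := fun N =>
    integral_nonneg hε.le fun x _ => pow_nonneg (by linarith [hFle1 x]) N
  refine limsup_le_of_le_add_of_tendsto_zero
    (r := fun N : ℕ => ε * C ^ (1 / γ) * ((N : ℝ) ^ (1 / γ) * (1 - F b) ^ N)) ?_ ?_ ?_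
  · refine isCoboundedUnder_le_of_eventually_le _ (hinv.mono fun N hN => div_nonneg (hI N) ?_)
    exact (rpow_nonneg (by positivity) _).trans hN
  · filter_upwards [hinv, eventually_ne_atTop 0] with N hle hN
    have hNpos : (0 : ℝ) < N := by positivity
    calc (∫ x in 0..ε, (1 - F x) ^ N) / Finv (1 / N)
        ≤ (∫ x in 0..ε, (1 - F x) ^ N) / (N * C) ^ (-1 / γ) :=
          div_le_div_of_nonneg_left (hI N) (by positivity) hle
      _ ≤ ((N * c) ^ (-1 / γ) * Gamma (1 / γ + 1) + ε * (1 - F b) ^ N) / (N * C) ^ (-1 / γ) :=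
          div_le_div_of_nonneg_right (integral_one_sub_pow_le_gamma_add hFmono hFle1 hγ hc hb.le
            (min_le_right a ε) (fun x hx => (hbounds' x hx).1) hN) (by positivity)
      _ = (c / C) ^ (-1 / γ) * Gamma (1 / γ + 1) +
            ε * C ^ (1 / γ) * ((N : ℝ) ^ (1 / γ) * (1 - F b) ^ N) := by
          rw [neg_div, rpow_neg (by positivity), rpow_neg (by positivity),
            rpow_neg (by positivity), mul_rpow hNpos.le hc.le, mul_rpow hNpos.le hC.le,
            div_rpow hc.le hC.le]
          field_simp
  · simpa using (tendsto_rpow_mul_pow_of_lt_one (1 / γ) (by linarith [hFle1 b])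
      (by linarith : 1 - F b < 1)).const_mul (ε * C ^ (1 / γ))

/-- Watson-type bound near the origin: for a CDF `F` with `F(x) ~ η x^γ` as `x ↓ 0`,
for every `ε₂ ∈ (0,1)` and all `ε₁` small enough,
`∫₀^{ε₁} (1-F(x))^N dx ≤ (1/γ) ∫₀^{ε₁^γ} x^{1/γ-1} e^{-N(1-ε₂)ηx} dx`, and
`limsup_N (∫₀^{ε₁} (1-F(x))^N dx) / F⁻¹(1/N) ≤ Γ(1 + 1/γ)`. -/
theorem integral_min_tail_watson_bound
    (F : ℝ → ℝ) (hFmono : Monotone F) (hFle1 : ∀ x, F x ≤ 1)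
    (η γ : ℝ) (hη : 0 < η) (hγ : 0 < γ)
    (horigin : Tendsto (fun x => F x / (η * x ^ γ)) (𝓝[>] 0) (𝓝 1))
    (Finv : ℝ → ℝ)
    (hFinv : ∀ y ∈ Set.Ioo (0 : ℝ) 1, 0 < Finv y ∧ F (Finv y) = y) :
    ∀ ε₂ ∈ Set.Ioo (0 : ℝ) 1, ∃ ε₁bar > (0 : ℝ), ∀ ε₁ ∈ Set.Ioc (0 : ℝ) ε₁bar,
      (∀ N : ℕ,
        (∫ x in (0 : ℝ)..ε₁, (1 - F x) ^ N) ≤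
          (1 / γ) * ∫ x in (0 : ℝ)..(ε₁ ^ γ),
            x ^ (1 / γ - 1) * Real.exp (-((N : ℝ) * (1 - ε₂) * η * x))) ∧
      Filter.limsup
          (fun N : ℕ => (∫ x in (0 : ℝ)..ε₁, (1 - F x) ^ N) / Finv (1 / N)) atTop ≤
        Real.Gamma (1 + 1 / γ) := by
  intro ε₂ hε₂
  obtain ⟨a, ha, hbounds⟩ := exists_bounds_of_tendsto_div_rpow hη horigin hε₂.1
  refine ⟨a, ha, fun ε₁ hε₁ => ⟨fun N => ?_, ?_⟩⟩
  · have hlow : ∀ x ∈ Ioc 0 ε₁, (1 - ε₂) * η * x ^ γ ≤ F x :=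
      fun x hx => (hbounds x ⟨hx.1, hx.2.trans hε₁.2⟩).1
    calc _ ≤ ∫ x in 0..ε₁, exp (-(N * ((1 - ε₂) * η)) * x ^ γ) :=
          integral_one_sub_pow_le_integral_exp hFmono hFle1 hε₁.1.le hγ.le hlow N
      _ = _ := by
          rw [integral_comp_rpow hγ hε₁.1.le fun u => exp (-(N * ((1 - ε₂) * η)) * u)]
          simp only [neg_mul, mul_assoc]
  · have hcont : ContinuousAt
        (fun δ : ℝ => ((1 - δ) * η / ((1 + δ) * η)) ^ (-1 / γ) * Gamma (1 / γ + 1)) 0 := by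
      fun_prop (disch := simp [hη.ne'])
    have hlim : Tendsto
        (fun δ : ℝ => ((1 - δ) * η / ((1 + δ) * η)) ^ (-1 / γ) * Gamma (1 / γ + 1)) (𝓝[>] 0)
        (𝓝 (Gamma (1 + 1 / γ))) := by
      simpa [hη.ne', add_comm] using hcont.tendsto.mono_left nhdsWithin_le_nhds
    refine ge_of_tendsto hlim ?_
    filter_upwards [Ioo_mem_nhdsGT one_pos] with δ hδ
    obtain ⟨b, hb, hboundsδ⟩ := exists_bounds_of_tendsto_div_rpow hη horigin hδ.1
    exact limsup_integral_one_sub_pow_div_le hFmono hFle1 hFinv hγ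
      (mul_pos (by linarith [hδ.2]) hη) (by nlinarith [hδ.1]) hb hε₁.1 hboundsδ
end
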